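/- arXiv:2509.07729 — 6 statements merged into one kernel-verified Lean document; each statement's English description precedes it below -/
import Mathlib

section
/- Let f : [0,1] → (0,∞) be positive, finite, and measurable, let U be uniform on [0,1], E an independent exponential random variable with rate 1, and F(x) := 1 - ∫₀¹ e^{-x f(y)} dy. Then the random variable Y := F(E/f(U)) is uniformly distributed on [0,1]. -/
open MeasureTheory ProbabilityTheory Set Filter Topology

namespace LuceAux

noncomputable def g (f : ℝ → ℝ) (x : ℝ) : ℝ :=
  ∫ y in Ioc (0:ℝ) 1, Real.exp (-x * f y)

local notation "μ₁" => volume.restrict (Ioc (0:ℝ) 1)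

instance : IsProbabilityMeasure (volume.restrict (Ioc (0:ℝ) 1)) :=
  ⟨by simp [Real.volume_Ioc]⟩

variable {f : ℝ → ℝ}

lemma meas_exp (hf : Measurable f) (x : ℝ) : Measurable fun y => Real.exp (-x * f y) :=
  Real.measurable_exp.comp (hf.const_mul (-x))

lemma integrable_exp (hf : Measurable f)
    (hfpos : ∀ᵐ y ∂(volume.restrict (Set.Ioc (0:ℝ) 1)), 0 < f y) {x : ℝ} (hx : 0 ≤ x) :
    Integrable (fun y => Real.exp (-x * f y)) μ₁ := by
  refine Integrable.mono' (integrable_const 1) (meas_exp hf x).aestronglyMeasurable ?_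
  filter_upwards [hfpos] with y hy
  rw [Real.norm_eq_abs, abs_of_pos (Real.exp_pos _)]
  exact Real.exp_le_one_iff.2 (by nlinarith)

lemma g_zero : g f 0 = 1 := by
  simp only [g, neg_zero, zero_mul, Real.exp_zero]
  simp [Real.volume_Ioc]

lemma g_pos (hf : Measurable f)
    (hfpos : ∀ᵐ y ∂(volume.restrict (Set.Ioc (0:ℝ) 1)), 0 < f y) {x : ℝ} (hx : 0 ≤ x) : 0 < g f x := by
  rw [g, integral_pos_iff_support_of_nonneg_ae
    (Filter.Eventually.of_forall fun y => (Real.exp_pos _).le) (integrable_exp hf hfpos hx)]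
  have hsupp : (Function.support fun y => Real.exp (-x * f y)) = univ := by
    ext y; simp [Function.mem_support, (Real.exp_pos (-x * f y)).ne']
  rw [hsupp]
  simp [Real.volume_Ioc]

lemma g_strictAnti (hf : Measurable f)
    (hfpos : ∀ᵐ y ∂(volume.restrict (Set.Ioc (0:ℝ) 1)), 0 < f y) : StrictAntiOn (g f) (Ici (0:ℝ)) := by
  intro x hx x' hx' hlt
  have hx0 : (0:ℝ) ≤ x := hx
  have hx'0 : (0:ℝ) ≤ x' := hx'
  have hkey : 0 < ∫ y in Ioc (0:ℝ) 1,
      (Real.exp (-x * f y) - Real.exp (-x' * f y)) := by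
    have hint : Integrable (fun y => Real.exp (-x * f y) - Real.exp (-x' * f y)) μ₁ :=
      (integrable_exp hf hfpos hx0).sub (integrable_exp hf hfpos hx'0)
    have hnn : 0 ≤ᵐ[μ₁] fun y => Real.exp (-x * f y) - Real.exp (-x' * f y) := by
      filter_upwards [hfpos] with y hy
      have h := Real.exp_le_exp.2 (show -x' * f y ≤ -x * f y by nlinarith)
      simpa using sub_nonneg.2 h
    rw [integral_pos_iff_support_of_nonneg_ae hnn hint]
    · have hae : ∀ᵐ y ∂μ₁, y ∈ Function.support
          fun y => Real.exp (-x * f y) - Real.exp (-x' * f y) := by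
        filter_upwards [hfpos] with y hy
        have h := Real.exp_lt_exp.2 (show -x' * f y < -x * f y by nlinarith)
        simp only [Function.mem_support]
        exact sub_ne_zero.2 (ne_of_gt h)
      have h1 : μ₁ (Function.support
          fun y => Real.exp (-x * f y) - Real.exp (-x' * f y)) = 1 := by
        have h1eq : (Function.support
            fun y => Real.exp (-x * f y) - Real.exp (-x' * f y)) =ᵐ[μ₁] (univ : Set ℝ) :=
          Filter.eventuallyEq_univ.2 hae
        rw [measure_congr h1eq]
        exact measure_univ
      rw [h1]; norm_num
  rw [integral_sub (integrable_exp hf hfpos hx0) (integrable_exp hf hfpos hx'0)] at hkey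
  have h2 := sub_pos.mp hkey
  simpa [g] using h2

lemma g_continuousOn (hf : Measurable f)
    (hfpos : ∀ᵐ y ∂(volume.restrict (Set.Ioc (0:ℝ) 1)), 0 < f y) : ContinuousOn (g f) (Ici (0:ℝ)) := by
  have hG : Continuous fun x => ∫ y in Ioc (0:ℝ) 1, Real.exp (-(max x 0) * f y) := by
    apply continuous_of_dominated (bound := fun _ => (1:ℝ))
    · exact fun x => (meas_exp hf _).aestronglyMeasurable
    · intro x
      filter_upwards [hfpos] with y hy
      rw [Real.norm_eq_abs, abs_of_pos (Real.exp_pos _)]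
      exact Real.exp_le_one_iff.2 (by nlinarith [le_max_right x (0:ℝ)])
    · exact integrable_const 1
    · filter_upwards with y
      exact Real.continuous_exp.comp
        (((continuous_id.max continuous_const).neg).mul continuous_const)
  refine (hG.continuousOn (s := Ici 0)).congr ?_
  intro x hx
  simp only [g, max_eq_left hx.out]

lemma g_tendsto (hf : Measurable f)
    (hfpos : ∀ᵐ y ∂(volume.restrict (Set.Ioc (0:ℝ) 1)), 0 < f y) : Tendsto (fun n : ℕ => g f n) atTop (𝓝 0) := by
  have h0 : (0:ℝ) = ∫ y in Ioc (0:ℝ) 1, (0:ℝ) := by simp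
  rw [h0]
  apply tendsto_integral_of_dominated_convergence (bound := fun _ => (1:ℝ))
  · exact fun n => (meas_exp hf _).aestronglyMeasurable
  · exact integrable_const 1
  · intro n
    filter_upwards [hfpos] with y hy
    rw [Real.norm_eq_abs, abs_of_pos (Real.exp_pos _)]
    exact Real.exp_le_one_iff.2 (by nlinarith [Nat.cast_nonneg (α := ℝ) n])
  · filter_upwards [hfpos] with y hy
    have h1 : Tendsto (fun n : ℕ => (n:ℝ) * f y) atTop atTop :=
      Tendsto.atTop_mul_const hy tendsto_natCast_atTop_atTop
    have h2 : Tendsto (fun n : ℕ => -(n:ℝ) * f y) atTop atBot := by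
      simp only [neg_mul]
      exact tendsto_neg_atBot_iff.mpr h1
    exact Real.tendsto_exp_atBot.comp h2

lemma exists_inv (hf : Measurable f)
    (hfpos : ∀ᵐ y ∂(volume.restrict (Set.Ioc (0:ℝ) 1)), 0 < f y) {a : ℝ} (ha : 0 < a) (ha' : a < 1) :
    ∃ x : ℝ, 0 ≤ x ∧ g f x = 1 - a := by
  obtain ⟨N, hN⟩ : ∃ N : ℕ, g f N < 1 - a := by
    have := (g_tendsto hf hfpos).eventually (eventually_lt_nhds (show (0:ℝ) < 1 - a by linarith))
    exact this.exists
  have hmem : 1 - a ∈ Icc (g f (N:ℝ)) (g f 0) := by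
    constructor
    · exact le_of_lt hN
    · rw [g_zero]; linarith
  have hsub : Icc (g f (N:ℝ)) (g f 0) ⊆ g f '' Icc 0 (N:ℝ) :=
    intermediate_value_Icc' (Nat.cast_nonneg N)
      ((g_continuousOn hf hfpos).mono Icc_subset_Ici_self)
  obtain ⟨x, hx, hxe⟩ := hsub hmem
  exact ⟨x, hx.1, hxe⟩

end LuceAux

open LuceAux

/-- The Luce permuton has uniform second marginal: for `U` uniform on `[0,1]` and `E` an
independent rate-1 exponential, with `F x = 1 - ∫₀¹ exp (-x * f y) dy`, the random variable
`Y = F (E / f U)` is uniformly distributed on `[0,1]`. -/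
theorem luce_second_marginal_uniform (f : ℝ → ℝ) (hf : Measurable f)
    (hfpos : ∀ᵐ y ∂(volume.restrict (Set.Ioc (0:ℝ) 1)), 0 < f y) :
    Measure.map
      (fun p : ℝ × ℝ =>
        1 - ∫ y in (0:ℝ)..1, Real.exp (-(p.2 / f p.1) * f y))
      ((volume.restrict (Set.Ioc (0:ℝ) 1)).prod (expMeasure 1))
      = volume.restrict (Set.Ioc (0:ℝ) 1) := by
  have hphi_eq : (fun p : ℝ × ℝ =>
      1 - ∫ y in (0:ℝ)..1, Real.exp (-(p.2 / f p.1) * f y)) =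
      fun p : ℝ × ℝ => 1 - g f (p.2 / f p.1) := by
    funext p
    rw [g, intervalIntegral.integral_of_le zero_le_one]
  rw [hphi_eq]
  set μ1 := volume.restrict (Ioc (0:ℝ) 1) with hμ1
  haveI : IsProbabilityMeasure (expMeasure (1:ℝ)) :=
    isProbabilityMeasure_expMeasure one_pos
  set ν := expMeasure (1:ℝ) with hν
  -- measurability of g
  have hgmeas : Measurable (g f) := by
    have hsm : StronglyMeasurable fun q : ℝ × ℝ => Real.exp (-q.1 * f q.2) :=
      (Real.measurable_exp.comp
        (measurable_fst.neg.mul (hf.comp measurable_snd))).stronglyMeasurable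
    exact hsm.integral_prod_right'.measurable
  have hh : Measurable fun p : ℝ × ℝ => p.2 / f p.1 :=
    measurable_snd.div (hf.comp measurable_fst)
  have hphi : Measurable fun p : ℝ × ℝ => 1 - g f (p.2 / f p.1) :=
    measurable_const.sub (hgmeas.comp hh)
  -- ν gives no mass to the nonpositive half-line
  have hIic0 : ν (Iic (0:ℝ)) = 0 := by
    rw [hν, ← ofReal_cdf]
    have h2 := cdf_expMeasure_eq one_pos 0
    simp only [h2]
    norm_num
  -- a.e. facts on the product
  have hae : ∀ᵐ p : ℝ × ℝ ∂(μ1.prod ν), 0 < f p.1 ∧ 0 < p.2 := by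
    rw [ae_iff]
    have hsub : {p : ℝ × ℝ | ¬(0 < f p.1 ∧ 0 < p.2)} ⊆
        ({u : ℝ | ¬ 0 < f u} ×ˢ univ) ∪ ((univ : Set ℝ) ×ˢ Iic (0:ℝ)) := by
      intro p hp
      simp only [mem_setOf_eq, not_and_or, not_lt] at hp
      rcases hp with h | h
      · exact Or.inl ⟨not_lt.2 h, mem_univ _⟩
      · exact Or.inr ⟨mem_univ _, h⟩
    refine le_antisymm ((measure_mono hsub).trans ?_) zero_le
    refine (measure_union_le _ _).trans ?_
    rw [Measure.prod_prod, Measure.prod_prod]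
    have h1 : μ1 {u : ℝ | ¬ 0 < f u} = 0 := ae_iff.mp hfpos
    rw [h1, hIic0]
    simp
  haveI : IsProbabilityMeasure (μ1.prod ν) := by infer_instance
  haveI : IsFiniteMeasure (Measure.map
      (fun p : ℝ × ℝ => 1 - g f (p.2 / f p.1)) (μ1.prod ν)) := by
    haveI := Measure.isProbabilityMeasure_map (μ := μ1.prod ν) hphi.aemeasurable
    infer_instance
  refine Measure.ext_of_Iic _ _ fun a => ?_
  rw [Measure.map_apply hphi measurableSet_Iic, Measure.restrict_apply measurableSet_Iic]
  rcases le_or_gt a 0 with ha0 | ha0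
  · -- a ≤ 0 : both sides are zero
    have hR : Iic a ∩ Ioc (0:ℝ) 1 = ∅ := by
      ext z
      simp only [mem_inter_iff, mem_Iic, mem_Ioc, mem_empty_iff_false, iff_false]
      rintro ⟨h1, h2, _⟩
      linarith
    rw [hR, measure_empty]
    have hnull : ∀ᵐ p : ℝ × ℝ ∂(μ1.prod ν),
        p ∉ (fun p : ℝ × ℝ => 1 - g f (p.2 / f p.1)) ⁻¹' Iic a := by
      filter_upwards [hae] with p hp
      obtain ⟨hfp, hp2⟩ := hp
      have hdiv : 0 < p.2 / f p.1 := div_pos hp2 hfp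
      have hglt : g f (p.2 / f p.1) < g f 0 :=
        g_strictAnti hf hfpos (le_refl (0:ℝ)) (le_of_lt hdiv) hdiv
      rw [g_zero] at hglt
      simp only [mem_preimage, mem_Iic, not_le]
      linarith
    exact measure_eq_zero_iff_ae_notMem.mpr hnull
  rcases le_or_gt 1 a with ha1 | ha1
  · -- 1 ≤ a : both sides are one
    have hR : Iic a ∩ Ioc (0:ℝ) 1 = Ioc (0:ℝ) 1 := by
      apply inter_eq_self_of_subset_right
      intro z hz
      exact le_trans hz.2 ha1
    rw [hR]
    have hmem : ∀ᵐ p : ℝ × ℝ ∂(μ1.prod ν),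
        p ∈ (fun p : ℝ × ℝ => 1 - g f (p.2 / f p.1)) ⁻¹' Iic a := by
      filter_upwards [hae] with p hp
      obtain ⟨hfp, hp2⟩ := hp
      have hdiv : 0 ≤ p.2 / f p.1 := le_of_lt (div_pos hp2 hfp)
      have hgp := g_pos hf hfpos hdiv
      simp only [mem_preimage, mem_Iic]
      linarith
    have hone : (μ1.prod ν)
        ((fun p : ℝ × ℝ => 1 - g f (p.2 / f p.1)) ⁻¹' Iic a) = 1 := by
      have h1 : ((fun p : ℝ × ℝ => 1 - g f (p.2 / f p.1)) ⁻¹' Iic a : Set (ℝ × ℝ))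
          =ᵐ[μ1.prod ν] (univ : Set (ℝ × ℝ)) := Filter.eventuallyEq_univ.2 hmem
      rw [measure_congr h1]
      exact measure_univ
    rw [hone]
    simp [Real.volume_Ioc]
  · -- 0 < a < 1 : the main computation
    obtain ⟨x, hx0, hgx⟩ := exists_inv hf hfpos ha0 ha1
    set T : Set (ℝ × ℝ) := {p : ℝ × ℝ | p.2 ≤ x * f p.1} with hT
    have hTmeas : MeasurableSet T :=
      measurableSet_le measurable_snd ((hf.comp measurable_fst).const_mul x)
    have heq : ((fun p : ℝ × ℝ => 1 - g f (p.2 / f p.1)) ⁻¹' Iic a : Set (ℝ × ℝ))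
        =ᵐ[μ1.prod ν] T := by
      rw [Filter.eventuallyEq_set]
      filter_upwards [hae] with p hp
      obtain ⟨hfp, hp2⟩ := hp
      have hdiv : 0 ≤ p.2 / f p.1 := le_of_lt (div_pos hp2 hfp)
      simp only [mem_preimage, mem_Iic, hT, mem_setOf_eq]
      constructor
      · intro hle
        have hga : g f x ≤ g f (p.2 / f p.1) := by rw [hgx]; linarith
        have hxle : p.2 / f p.1 ≤ x :=
          ((g_strictAnti hf hfpos).le_iff_ge hx0 hdiv).mp hga
        exact (div_le_iff₀ hfp).mp hxle
      · intro hle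
        have hxle : p.2 / f p.1 ≤ x := (div_le_iff₀ hfp).mpr hle
        have hga : g f x ≤ g f (p.2 / f p.1) :=
          ((g_strictAnti hf hfpos).le_iff_ge hx0 hdiv).mpr hxle
        rw [hgx] at hga
        linarith
    rw [measure_congr heq, Measure.prod_apply hTmeas]
    have hslice : ∀ᵐ u ∂μ1, ν (Prod.mk u ⁻¹' T) =
        ENNReal.ofReal (1 - Real.exp (-x * f u)) := by
      filter_upwards [hfpos] with u hu
      have hset : Prod.mk u ⁻¹' T = Iic (x * f u) := rfl
      rw [hset, hν, ← ofReal_cdf]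
      have h2 := cdf_expMeasure_eq one_pos (x * f u)
      rw [h2, if_pos (mul_nonneg hx0 hu.le), one_mul, neg_mul]
    rw [lintegral_congr_ae hslice]
    have hint : Integrable (fun u => 1 - Real.exp (-x * f u)) μ1 :=
      (integrable_const 1).sub (integrable_exp hf hfpos hx0)
    have hnn : 0 ≤ᵐ[μ1] fun u => 1 - Real.exp (-x * f u) := by
      filter_upwards [hfpos] with u hu
      have := Real.exp_le_one_iff.2 (show -x * f u ≤ 0 by nlinarith)
      simp only [Pi.zero_apply]
      linarith
    rw [← ofReal_integral_eq_lintegral_ofReal hint hnn]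
    have hI : ∫ u, (1 - Real.exp (-x * f u)) ∂μ1 = a := by
      rw [integral_sub (integrable_const 1) (integrable_exp hf hfpos hx0)]
      have h1 : ∫ _u, (1:ℝ) ∂μ1 = 1 := by
        rw [integral_const]
        simp
      have h2 : ∫ u, Real.exp (-x * f u) ∂μ1 = 1 - a := hgx
      rw [h1, h2]
      ring
    rw [hI]
    have hR : Iic a ∩ Ioc (0:ℝ) 1 = Ioc (0:ℝ) a := by
      ext z
      simp only [mem_inter_iff, mem_Iic, mem_Ioc]
      constructor
      · rintro ⟨h1, h2, _⟩; exact ⟨h2, h1⟩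
      · rintro ⟨h1, h2⟩; exact ⟨h2, h1, by linarith⟩
    rw [hR, Real.volume_Ioc, sub_zero]
end

section
/- Let f : [0,1] → (0,∞) be positive, finite, measurable, F(x) := 1 - ∫₀¹ e^{-x f(y)} dy, U uniform on [0,1], E exponential with rate 1 independent of U. Then for every bounded measurable g : [0,1]² → ℝ, E[g(U, F(E/f(U)))] = ∫₀¹∫₀¹ g(x,y) ρ(x,y) dy dx, where ρ(x,y) = f(x) e^{-f(x) F⁻¹(y)} / ∫₀¹ f(t) e^{-f(t) F⁻¹(y)} dt. -/
open MeasureTheory ProbabilityTheory Set intervalIntegral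
open scoped ENNReal NNReal

namespace LuceAux

noncomputable def Fm (f : ℝ → ℝ) (x : ℝ) : ℝ := 1 - ∫ t in (0:ℝ)..1, Real.exp (-x * f t)

noncomputable def Gm (f : ℝ → ℝ) (s : ℝ) : ℝ := ∫ t in (0:ℝ)..1, f t * Real.exp (-(f t) * s)

lemma exp_mul_le {a b : ℝ} (ha : 0 ≤ a) (hb : 0 < b) : a * Real.exp (-(b * a)) ≤ 1 / b := by
  have h1 : b * a ≤ Real.exp (b * a) := by
    have := Real.add_one_le_exp (b * a); linarith
  rw [Real.exp_neg]
  rw [mul_inv_le_iff₀ (Real.exp_pos _), div_mul_eq_mul_div, one_mul, le_div_iff₀ hb]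
  nlinarith

variable {f : ℝ → ℝ}

lemma integrable_exp_comp (hf : Measurable f)
    (hfpos : ∀ᵐ y ∂(volume.restrict (Set.Ioc (0:ℝ) 1)), 0 < f y) {x : ℝ} (hx : 0 ≤ x) :
    Integrable (fun t => Real.exp (-x * f t)) (volume.restrict (Set.Ioc (0:ℝ) 1)) := by
  have : IsFiniteMeasure (volume.restrict (Set.Ioc (0:ℝ) 1)) :=
    ⟨by simp [Real.volume_Ioc]⟩
  refine Integrable.mono' (integrable_const 1)
    ((Real.measurable_exp.comp (hf.const_mul (-x))).aestronglyMeasurable) ?_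
  filter_upwards [hfpos] with t ht
  rw [Real.norm_eq_abs, abs_of_pos (Real.exp_pos _)]
  exact Real.exp_le_one_iff.mpr (by nlinarith)

lemma hasDerivAt_Fm (hf : Measurable f)
    (hfpos : ∀ᵐ y ∂(volume.restrict (Set.Ioc (0:ℝ) 1)), 0 < f y) {s : ℝ} (hs : 0 < s) :
    Integrable (fun t => f t * Real.exp (-(f t) * s)) (volume.restrict (Set.Ioc (0:ℝ) 1)) ∧
      HasDerivAt (Fm f) (Gm f s) s := by
  have : IsFiniteMeasure (volume.restrict (Set.Ioc (0:ℝ) 1)) :=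
    ⟨by simp [Real.volume_Ioc]⟩
  have key := _root_.hasDerivAt_integral_of_dominated_loc_of_deriv_le
    (μ := volume.restrict (Set.Ioc (0:ℝ) 1))
    (F := fun x t => Real.exp (-x * f t)) (F' := fun x t => -(f t * Real.exp (-x * f t)))
    (x₀ := s) (bound := fun _ => 2 / s) (s := Metric.ball s (s/2)) (Metric.ball_mem_nhds s (half_pos hs))
    (Filter.Eventually.of_forall fun x =>
      ((Real.measurable_exp.comp (hf.const_mul (-x))).aestronglyMeasurable))
    (integrable_exp_comp hf hfpos hs.le)
    (((hf.mul (Real.measurable_exp.comp (hf.const_mul (-s)))).neg).aestronglyMeasurable)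
    ?_ (integrable_const _) ?_
  · constructor
    · have h1 := key.1
      have : (fun t => f t * Real.exp (-(f t) * s))
          = fun t => -(-(f t * Real.exp (-s * f t))) := by
        funext t; rw [neg_neg]; ring_nf
      rw [this]
      exact h1.neg
    · have h2 := key.2
      have hFm : Fm f = fun x => 1 - ∫ t in Set.Ioc (0:ℝ) 1, Real.exp (-x * f t) := by
        funext x
        rw [Fm, intervalIntegral.integral_of_le zero_le_one]
      rw [hFm]
      have hG : Gm f s = -∫ t in Set.Ioc (0:ℝ) 1, -(f t * Real.exp (-s * f t)) := by
        rw [Gm, intervalIntegral.integral_of_le zero_le_one, MeasureTheory.integral_neg, neg_neg]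
        congr 1; funext t; ring_nf
      rw [hG]
      exact h2.const_sub 1
  · filter_upwards [hfpos] with t ht
    intro x hx
    have hxs : s/2 ≤ x := by
      have := abs_lt.mp (by simpa [Real.dist_eq] using hx)
      linarith [this.1]
    have hx0 : 0 < x := lt_of_lt_of_le (half_pos hs) hxs
    rw [norm_neg, Real.norm_eq_abs, abs_of_pos (mul_pos ht (Real.exp_pos _))]
    calc f t * Real.exp (-x * f t) ≤ f t * Real.exp (-(s/2) * f t) := by
          apply mul_le_mul_of_nonneg_left _ ht.le
          apply Real.exp_le_exp.mpr
          nlinarith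
      _ ≤ 1 / (s/2) := by
          have := exp_mul_le ht.le (half_pos hs)
          calc f t * Real.exp (-(s/2) * f t) = f t * Real.exp (-(s/2 * f t)) := by ring_nf
            _ ≤ 1 / (s/2) := exp_mul_le ht.le (half_pos hs)
      _ = 2 / s := by rw [div_div_eq_mul_div, one_mul]
  · filter_upwards with t
    intro x hx
    have : HasDerivAt (fun x : ℝ => -x * f t) (-(f t)) x := by
      simpa using ((hasDerivAt_id x).neg.mul_const (f t))
    have := this.exp
    simpa [mul_comm, neg_mul] using this

instance : IsFiniteMeasure (volume.restrict (Set.Ioc (0:ℝ) 1)) :=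
  ⟨by simp [Real.volume_Ioc]⟩

lemma integral_pos_of_ae_pos {v : ℝ → ℝ}
    (hv_int : Integrable v (volume.restrict (Set.Ioc (0:ℝ) 1)))
    (hv : ∀ᵐ t ∂(volume.restrict (Set.Ioc (0:ℝ) 1)), 0 < v t) :
    0 < ∫ t in Set.Ioc (0:ℝ) 1, v t := by
  rw [MeasureTheory.integral_pos_iff_support_of_nonneg_ae
    (hv.mono fun t ht => ht.le) hv_int]
  by_contra h
  have hsupp : (volume.restrict (Set.Ioc (0:ℝ) 1)) (Function.support v) = 0 :=
    le_antisymm (not_lt.mp h) zero_le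
  have hnull : (volume.restrict (Set.Ioc (0:ℝ) 1)) {t | ¬ 0 < v t} = 0 :=
    MeasureTheory.ae_iff.mp hv
  have huniv : (volume.restrict (Set.Ioc (0:ℝ) 1)) Set.univ = 0 := by
    refine measure_mono_null (fun t _ => ?_) (measure_union_null hnull hsupp)
    by_cases ht : 0 < v t
    · exact Or.inr (ne_of_gt ht)
    · exact Or.inl ht
  simp [Real.volume_Ioc] at huniv

lemma Gm_pos (hf : Measurable f)
    (hfpos : ∀ᵐ y ∂(volume.restrict (Set.Ioc (0:ℝ) 1)), 0 < f y) {s : ℝ} (hs : 0 < s) :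
    0 < Gm f s := by
  rw [Gm, intervalIntegral.integral_of_le zero_le_one]
  exact integral_pos_of_ae_pos (hasDerivAt_Fm hf hfpos hs).1
    (hfpos.mono fun t ht => mul_pos ht (Real.exp_pos _))

lemma Fm_mem_Ioo (hf : Measurable f)
    (hfpos : ∀ᵐ y ∂(volume.restrict (Set.Ioc (0:ℝ) 1)), 0 < f y) {s : ℝ} (hs : 0 < s) :
    Fm f s ∈ Set.Ioo (0:ℝ) 1 := by
  have hint := integrable_exp_comp hf hfpos hs.le
  constructor
  · have h2 : ∫ t in Set.Ioc (0:ℝ) 1, (1 - Real.exp (-s * f t))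
        = 1 - ∫ t in Set.Ioc (0:ℝ) 1, Real.exp (-s * f t) := by
      rw [MeasureTheory.integral_sub (integrable_const 1) hint]
      simp [Real.volume_Ioc]
    have h3 : 0 < ∫ t in Set.Ioc (0:ℝ) 1, (1 - Real.exp (-s * f t)) := by
      refine integral_pos_of_ae_pos ((integrable_const 1).sub hint) ?_
      filter_upwards [hfpos] with t ht
      have : Real.exp (-s * f t) < 1 := by
        rw [Real.exp_lt_one_iff]; nlinarith
      linarith
    rw [Fm, intervalIntegral.integral_of_le zero_le_one]
    linarith [h2 ▸ h3]
  · have h3 : 0 < ∫ t in Set.Ioc (0:ℝ) 1, Real.exp (-s * f t) :=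
      integral_pos_of_ae_pos hint
        (Filter.Eventually.of_forall fun t => Real.exp_pos _)
    rw [Fm, intervalIntegral.integral_of_le zero_le_one]
    linarith

lemma strictMonoOn_Fm (hf : Measurable f)
    (hfpos : ∀ᵐ y ∂(volume.restrict (Set.Ioc (0:ℝ) 1)), 0 < f y) :
    StrictMonoOn (Fm f) (Set.Ioi 0) := by
  apply strictMonoOn_of_deriv_pos (convex_Ioi 0)
  · intro s hs
    exact ((hasDerivAt_Fm hf hfpos hs).2.continuousAt.continuousWithinAt)
  · intro s hs
    rw [interior_Ioi] at hs
    rw [(hasDerivAt_Fm hf hfpos hs).2.deriv]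
    exact Gm_pos hf hfpos hs

lemma exponentialPDFReal_one (e : ℝ) :
    exponentialPDFReal 1 e = if 0 ≤ e then Real.exp (-e) else 0 := by
  rw [exponentialPDFReal, gammaPDFReal]
  split_ifs with he
  · simp [Real.Gamma_one, Real.one_rpow, sub_self, Real.rpow_zero]
  · rfl

end LuceAux

open LuceAux

/-- The density of the Luce permuton: for `U` uniform on `[0,1]`, `E` an independent rate-1
exponential, `F x = 1 - ∫₀¹ exp (-x f y) dy` and `Finv` its inverse (from `(0,1)` onto
`(0,∞)`), for every bounded measurable `g : [0,1]² → ℝ`,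
`E[g (U, F (E / f U))] = ∫₀¹ ∫₀¹ g x y • ρ x y dy dx` where
`ρ x y = f x * exp (-f x * Finv y) / ∫₀¹ f t * exp (-f t * Finv y) dt`. -/
theorem luce_permuton_density (f : ℝ → ℝ) (hf : Measurable f)
    (hfpos : ∀ᵐ y ∂(volume.restrict (Set.Ioc (0:ℝ) 1)), 0 < f y)
    (Finv : ℝ → ℝ)
    (hFinv : ∀ y ∈ Set.Ioo (0:ℝ) 1,
      Finv y ∈ Set.Ioi (0:ℝ) ∧
        1 - ∫ t in (0:ℝ)..1, Real.exp (-(Finv y) * f t) = y)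
    (g : ℝ → ℝ → ℝ) (hg : Measurable (Function.uncurry g))
    (C : ℝ) (hgbd : ∀ x y, |g x y| ≤ C) :
    ∫ p : ℝ × ℝ,
        g p.1 (1 - ∫ y in (0:ℝ)..1, Real.exp (-(p.2 / f p.1) * f y))
      ∂((volume.restrict (Set.Ioc (0:ℝ) 1)).prod (expMeasure 1))
    = ∫ x in (0:ℝ)..1, ∫ y in (0:ℝ)..1,
        g x y *
          (f x * Real.exp (-(f x) * Finv y) /
            ∫ t in (0:ℝ)..1, f t * Real.exp (-(f t) * Finv y)) := by
  haveI hexpP : IsProbabilityMeasure (expMeasure 1) :=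
    isProbabilityMeasure_expMeasure one_pos
  have hFm_meas : Measurable (Fm f) := by
    have h1 : Measurable fun p : ℝ × ℝ => Real.exp (-p.1 * f p.2) :=
      (measurable_fst.neg.mul (hf.comp measurable_snd)).exp
    have h2 : Measurable fun x : ℝ => ∫ t in Set.Ioc (0:ℝ) 1, Real.exp (-x * f t) :=
      h1.stronglyMeasurable.integral_prod_right'.measurable
    have h3 : Fm f = fun x => 1 - ∫ t in Set.Ioc (0:ℝ) 1, Real.exp (-x * f t) := by
      funext x; rw [Fm, intervalIntegral.integral_of_le zero_le_one]
    rw [h3]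
    exact measurable_const.sub h2
  have hH : Measurable fun p : ℝ × ℝ => g p.1 (Fm f (p.2 / f p.1)) :=
    hg.comp (measurable_fst.prodMk
      (hFm_meas.comp (measurable_snd.div (hf.comp measurable_fst))))
  have hint : Integrable (fun p : ℝ × ℝ => g p.1 (Fm f (p.2 / f p.1)))
      ((volume.restrict (Set.Ioc (0:ℝ) 1)).prod (expMeasure 1)) := by
    refine Integrable.mono' (integrable_const C) hH.aestronglyMeasurable ?_
    filter_upwards with p
    rw [Real.norm_eq_abs]
    exact hgbd _ _
  show ∫ p : ℝ × ℝ, g p.1 (Fm f (p.2 / f p.1))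
      ∂((volume.restrict (Set.Ioc (0:ℝ) 1)).prod (expMeasure 1)) = _
  calc ∫ p : ℝ × ℝ, g p.1 (Fm f (p.2 / f p.1))
        ∂((volume.restrict (Set.Ioc (0:ℝ) 1)).prod (expMeasure 1))
      = ∫ x in Set.Ioc (0:ℝ) 1, ∫ e, g x (Fm f (e / f x)) ∂(expMeasure 1) :=
        MeasureTheory.integral_prod _ hint
    _ = ∫ x in Set.Ioc (0:ℝ) 1, ∫ y in (0:ℝ)..1,
          g x y * (f x * Real.exp (-(f x) * Finv y) /
            ∫ t in (0:ℝ)..1, f t * Real.exp (-(f t) * Finv y)) := by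
        apply MeasureTheory.integral_congr_ae
        filter_upwards [hfpos] with x hc
        -- Step 1 : write the exponential integral as a set integral on `Ioi 0`
        have hgx : Measurable fun e : ℝ => g x (Fm f (e / f x)) :=
          hg.of_uncurry_left.comp (hFm_meas.comp (measurable_id.div_const (f x)))
        have step1 : ∫ e, g x (Fm f (e / f x)) ∂(expMeasure 1)
            = ∫ e in Set.Ioi (0:ℝ), Real.exp (-e) * g x (Fm f (e / f x)) := by
          have h1 : (expMeasure 1)
              = volume.withDensity fun e => ((exponentialPDFReal 1 e).toNNReal : ℝ≥0∞) := rfl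
          rw [h1, integral_withDensity_eq_integral_smul
            ((measurable_exponentialPDFReal 1).real_toNNReal)]
          have h2 : (fun e => ((exponentialPDFReal 1 e).toNNReal : ℝ≥0) • g x (Fm f (e / f x)))
              = Set.indicator (Set.Ici (0:ℝ))
                  (fun e => Real.exp (-e) * g x (Fm f (e / f x))) := by
            funext e
            rw [NNReal.smul_def, Real.coe_toNNReal', exponentialPDFReal_one]
            by_cases he : 0 ≤ e
            · rw [if_pos he, Set.indicator_of_mem (Set.mem_Ici.mpr he),
                max_eq_left (Real.exp_pos (-e)).le, smul_eq_mul]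
            · rw [if_neg he, Set.indicator_of_notMem (by simpa using he)]
              simp
          rw [h2, MeasureTheory.integral_indicator measurableSet_Ici,
            MeasureTheory.integral_Ici_eq_integral_Ioi]
        -- Step 2 : change of variables e ↦ Fm f (e / f x) on `Ioi 0`
        have himg : (fun e => Fm f (e / f x)) '' (Set.Ioi 0) = Set.Ioo (0:ℝ) 1 := by
          ext y
          constructor
          · rintro ⟨e, he, rfl⟩
            exact Fm_mem_Ioo hf hfpos (div_pos he hc)
          · intro hy
            obtain ⟨hy1, hy2⟩ := hFinv y hy
            refine ⟨f x * Finv y, mul_pos hc hy1, ?_⟩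
            show Fm f (f x * Finv y / f x) = y
            rw [mul_div_cancel_left₀ _ (ne_of_gt hc)]
            exact hy2
        have hderiv : ∀ e ∈ Set.Ioi (0:ℝ),
            HasDerivWithinAt (fun e => Fm f (e / f x))
              (Gm f (e / f x) * (1 / f x)) (Set.Ioi 0) e := by
          intro e he
          have h1 : HasDerivAt (fun e : ℝ => e / f x) (1 / f x) e := by
            simpa using (hasDerivAt_id e).div_const (f x)
          exact (((hasDerivAt_Fm hf hfpos (div_pos he hc)).2.comp e h1)).hasDerivWithinAt
        have hinj : Set.InjOn (fun e => Fm f (e / f x)) (Set.Ioi 0) := by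
          intro a ha b hb hab
          have h1 := (strictMonoOn_Fm hf hfpos).injOn
            (Set.mem_Ioi.mpr (div_pos ha hc)) (Set.mem_Ioi.mpr (div_pos hb hc)) hab
          field_simp [ne_of_gt hc] at h1
          exact h1
        have hchg := MeasureTheory.integral_image_eq_integral_abs_deriv_smul
          measurableSet_Ioi hderiv hinj
          (fun y => g x y * (f x * Real.exp (-(f x) * Finv y) / Gm f (Finv y)))
        rw [himg] at hchg
        -- Step 3 : pointwise identification of the integrands on `Ioi 0`
        have hpt : ∀ e ∈ Set.Ioi (0:ℝ),
            Real.exp (-e) * g x (Fm f (e / f x))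
              = |Gm f (e / f x) * (1 / f x)| •
                  (fun y => g x y * (f x * Real.exp (-(f x) * Finv y) / Gm f (Finv y)))
                    (Fm f (e / f x)) := by
          intro e he
          have hec : 0 < e / f x := div_pos he hc
          have hmem := Fm_mem_Ioo hf hfpos hec
          have hGme : 0 < Gm f (e / f x) := Gm_pos hf hfpos hec
          have hFinv_eq : Finv (Fm f (e / f x)) = e / f x := by
            obtain ⟨h1, h2⟩ := hFinv _ hmem
            exact (strictMonoOn_Fm hf hfpos).injOn h1 hec h2
          simp only [smul_eq_mul]
          rw [hFinv_eq, abs_of_pos (mul_pos hGme (by positivity))]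
          have h4 : -(f x) * (e / f x) = -e := by field_simp
          rw [h4]
          field_simp
        calc ∫ e, g x (Fm f (e / f x)) ∂(expMeasure 1)
            = ∫ e in Set.Ioi (0:ℝ), Real.exp (-e) * g x (Fm f (e / f x)) := step1
          _ = ∫ e in Set.Ioi (0:ℝ), |Gm f (e / f x) * (1 / f x)| •
                (fun y => g x y * (f x * Real.exp (-(f x) * Finv y) / Gm f (Finv y)))
                  (Fm f (e / f x)) :=
              MeasureTheory.setIntegral_congr_fun measurableSet_Ioi hpt
          _ = ∫ y in Set.Ioo (0:ℝ) 1,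
                g x y * (f x * Real.exp (-(f x) * Finv y) / Gm f (Finv y)) := hchg.symm
          _ = ∫ y in Set.Ioc (0:ℝ) 1,
                g x y * (f x * Real.exp (-(f x) * Finv y) / Gm f (Finv y)) :=
              (MeasureTheory.integral_Ioc_eq_integral_Ioo).symm
          _ = ∫ y in (0:ℝ)..1,
                g x y * (f x * Real.exp (-(f x) * Finv y) /
                  ∫ t in (0:ℝ)..1, f t * Real.exp (-(f t) * Finv y)) := by
              rw [intervalIntegral.integral_of_le zero_le_one]
              rfl
    _ = ∫ x in (0:ℝ)..1, ∫ y in (0:ℝ)..1,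
          g x y * (f x * Real.exp (-(f x) * Finv y) /
            ∫ t in (0:ℝ)..1, f t * Real.exp (-(f t) * Finv y)) :=
        (intervalIntegral.integral_of_le zero_le_one).symm
end

section
/- The triple integral 6 ∫_{0<u₁<u₂<u₃<1} [(1-u₁)/((1-u₁)+(1-u₂)+(1-u₃))] · [(1-u₂)/((1-u₂)+(1-u₃))] du₁ du₂ du₃ equals (1/4)(2 - log(27/16)). -/
open intervalIntegral Real

noncomputable def Mfun (c : ℝ) : ℝ :=
  c/4 - c^2/4 + (c+c^2)*Real.log 2 - 3*c^2/8*Real.log 3 + (1+5*c/8)*(c*Real.log c)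
    - c*(1+c)*Real.log (1+c) + (1/2+c+3*c^2/8)*Real.log (2+c)
    - (1+2*c)/2*Real.log (1+2*c)

noncomputable def Nfun (c : ℝ) : ℝ :=
  (c+c^2-c^3)/12 + (c^2/2+c^3/3)*Real.log 2 - c^3/8*Real.log 3
    + (c/2+5*c^2/24)*(c*Real.log c) + (1/6-c^2/2-c^3/3)*Real.log (1+c)
    + (c/2+c^2/2+c^3/8)*Real.log (2+c) - (1+2*c)^2/8*Real.log (1+2*c)

lemma lemA (u₂ u₃ : ℝ) (h0 : 0 ≤ u₂) (h23 : u₂ ≤ u₃) (h3 : u₃ < 1) :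
    ∫ u₁ in (0:ℝ)..u₂,
        ((1 - u₁) / ((1 - u₁) + (1 - u₂) + (1 - u₃))) *
          ((1 - u₂) / ((1 - u₂) + (1 - u₃)))
    = (1-u₂)/(2-u₂-u₃) *
        (u₂ + (2-u₂-u₃)*(Real.log (3-2*u₂-u₃) - Real.log (3-u₂-u₃))) := by
  have hs : (0:ℝ) < 2-u₂-u₃ := by linarith
  have hderiv : ∀ x ∈ Set.uIcc (0:ℝ) u₂,
      HasDerivAt (fun u₁ => (1-u₂)/(2-u₂-u₃) * (u₁ + (2-u₂-u₃)*Real.log (3-u₁-u₂-u₃)))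
        (((1 - x) / ((1 - x) + (1 - u₂) + (1 - u₃))) * ((1 - u₂) / ((1 - u₂) + (1 - u₃)))) x := by
    intro x hx
    rw [Set.uIcc_of_le h0] at hx
    obtain ⟨hx0, hx2⟩ := hx
    have hD : (0:ℝ) < 3-x-u₂-u₃ := by linarith
    have h1 : HasDerivAt (fun u₁ : ℝ => 3-u₁-u₂-u₃) (-1) x := by
      simpa using (((hasDerivAt_id x).const_sub 3).sub_const u₂).sub_const u₃
    have hlog := h1.log (ne_of_gt hD)
    have h2 := ((hasDerivAt_id x).add (hlog.const_mul (2-u₂-u₃))).const_mul ((1-u₂)/(2-u₂-u₃))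
    refine h2.congr_deriv ?_
    have h4 : (1-x)+(1-u₂)+(1-u₃) = 3-x-u₂-u₃ := by ring
    have h5 : (1-u₂)+(1-u₃) = 2-u₂-u₃ := by ring
    rw [h4, h5]
    field_simp
    ring
  have hint : IntervalIntegrable (fun x : ℝ =>
      ((1 - x) / ((1 - x) + (1 - u₂) + (1 - u₃))) * ((1 - u₂) / ((1 - u₂) + (1 - u₃))))
      MeasureTheory.volume 0 u₂ := by
    apply ContinuousOn.intervalIntegrable
    apply ContinuousOn.mul _ continuousOn_const
    apply ContinuousOn.div (by fun_prop) (by fun_prop)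
    intro x hx
    rw [Set.uIcc_of_le h0] at hx
    obtain ⟨hx0, hx2⟩ := hx
    have : (0:ℝ) < (1-x)+(1-u₂)+(1-u₃) := by linarith
    linarith
  rw [intervalIntegral.integral_eq_sub_of_hasDerivAt hderiv hint]
  show (1-u₂)/(2-u₂-u₃) * (u₂ + (2-u₂-u₃)*Real.log (3-u₂-u₂-u₃))
      - (1-u₂)/(2-u₂-u₃) * (0 + (2-u₂-u₃)*Real.log (3-0-u₂-u₃)) = _
  rw [show (3:ℝ)-u₂-u₂-u₃ = 3-2*u₂-u₃ by ring, show (3:ℝ)-0-u₂-u₃ = 3-u₂-u₃ by ring]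
  ring

lemma lemB (u₃ : ℝ) (h0 : 0 ≤ u₃) (h1 : u₃ < 1) :
    ∫ u₂ in (0:ℝ)..u₃, (1-u₂)/(2-u₂-u₃) *
        (u₂ + (2-u₂-u₃)*(Real.log (3-2*u₂-u₃) - Real.log (3-u₂-u₃)))
    = Mfun (1-u₃) := by
  have hderiv : ∀ x ∈ Set.uIcc (0:ℝ) u₃, HasDerivAt (fun y : ℝ =>
      (1-y)^2/2 - (2-u₃)*(1-y)/2 - (1-u₃)*(1-y)/4
      + (1-u₃)*(2-u₃)*Real.log (2-y-u₃)
      - ((1-y)^2/2 - (1-u₃)^2/8)*Real.log (3-2*y-u₃)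
      + ((1-y)^2-(2-u₃)^2)/2*Real.log (3-y-u₃))
      ((1-x)/(2-x-u₃) * (x + (2-x-u₃)*(Real.log (3-2*x-u₃) - Real.log (3-x-u₃)))) x := by
    intro x hx
    rw [Set.uIcc_of_le h0] at hx
    obtain ⟨hx0, hx2⟩ := hx
    have d1 : (0:ℝ) < 2-x-u₃ := by linarith
    have d2 : (0:ℝ) < 3-2*x-u₃ := by linarith
    have d3 : (0:ℝ) < 3-x-u₃ := by linarith
    have hb : HasDerivAt (fun y : ℝ => 1-y) (-1) x := by
      simpa using (hasDerivAt_id x).const_sub 1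
    have hb2 : HasDerivAt (fun y : ℝ => (1-y)^2) (2*(1-x)^1*(-1)) x := hb.pow 2
    have hl1 : HasDerivAt (fun y : ℝ => Real.log (2-y-u₃)) (-1/(2-x-u₃)) x := by
      have h : HasDerivAt (fun y : ℝ => 2-y-u₃) (-1) x := by
        simpa using ((hasDerivAt_id x).const_sub 2).sub_const u₃
      exact h.log (ne_of_gt d1)
    have hl2 : HasDerivAt (fun y : ℝ => Real.log (3-2*y-u₃)) (-2/(3-2*x-u₃)) x := by
      have h : HasDerivAt (fun y : ℝ => 3-2*y-u₃) (-2) x := by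
        have := (((hasDerivAt_id x).const_mul 2).const_sub 3).sub_const u₃
        simpa using this
      exact h.log (ne_of_gt d2)
    have hl3 : HasDerivAt (fun y : ℝ => Real.log (3-y-u₃)) (-1/(3-x-u₃)) x := by
      have h : HasDerivAt (fun y : ℝ => 3-y-u₃) (-1) x := by
        simpa using ((hasDerivAt_id x).const_sub 3).sub_const u₃
      exact h.log (ne_of_gt d3)
    have t1 := hb2.div_const 2
    have t2 := (hb.const_mul (2-u₃)).div_const 2
    have t3 := (hb.const_mul (1-u₃)).div_const 4
    have t4 := hl1.const_mul ((1-u₃)*(2-u₃))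
    have t5 := ((hb2.div_const 2).sub_const ((1-u₃)^2/8)).mul hl2
    have t6 := ((hb2.sub_const ((2-u₃)^2)).div_const 2).mul hl3
    have total := ((((t1.sub t2).sub t3).add t4).sub t5).add t6
    refine total.congr_deriv ?_
    field_simp
    ring
  have hint : IntervalIntegrable (fun x : ℝ => (1-x)/(2-x-u₃) *
      (x + (2-x-u₃)*(Real.log (3-2*x-u₃) - Real.log (3-x-u₃))))
      MeasureTheory.volume 0 u₃ := by
    apply ContinuousOn.intervalIntegrable
    rw [Set.uIcc_of_le h0]
    have hd : ∀ x ∈ Set.Icc (0:ℝ) u₃, (2:ℝ)-x-u₃ ≠ 0 := fun x hx => by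
      have := hx.2; intro h; nlinarith [hx.1]
    apply ContinuousOn.mul
    · exact ContinuousOn.div (by fun_prop) (by fun_prop) hd
    · apply ContinuousOn.add continuousOn_id
      apply ContinuousOn.mul (by fun_prop)
      apply ContinuousOn.sub
      · exact ContinuousOn.log (by fun_prop) (fun x hx => by have := hx.1; have := hx.2; intro h; nlinarith)
      · exact ContinuousOn.log (by fun_prop) (fun x hx => by have := hx.1; have := hx.2; intro h; nlinarith)
  rw [intervalIntegral.integral_eq_sub_of_hasDerivAt hderiv hint]
  show (1-u₃)^2/2 - (2-u₃)*(1-u₃)/2 - (1-u₃)*(1-u₃)/4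
      + (1-u₃)*(2-u₃)*Real.log (2-u₃-u₃)
      - ((1-u₃)^2/2 - (1-u₃)^2/8)*Real.log (3-2*u₃-u₃)
      + ((1-u₃)^2-(2-u₃)^2)/2*Real.log (3-u₃-u₃)
      - ((1-0)^2/2 - (2-u₃)*(1-0)/2 - (1-u₃)*(1-0)/4
      + (1-u₃)*(2-u₃)*Real.log (2-0-u₃)
      - ((1-0)^2/2 - (1-u₃)^2/8)*Real.log (3-2*0-u₃)
      + ((1-0)^2-(2-u₃)^2)/2*Real.log (3-0-u₃)) = _
  have hc : (0:ℝ) < 1 - u₃ := by linarith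
  have e1 : Real.log (2-u₃-u₃) = Real.log 2 + Real.log (1-u₃) := by
    rw [show (2:ℝ)-u₃-u₃ = 2*(1-u₃) by ring, Real.log_mul two_ne_zero (ne_of_gt hc)]
  have e2 : Real.log (3-2*u₃-u₃) = Real.log 3 + Real.log (1-u₃) := by
    rw [show (3:ℝ)-2*u₃-u₃ = 3*(1-u₃) by ring,
      Real.log_mul (by norm_num) (ne_of_gt hc)]
  have e3 : Real.log (3-u₃-u₃) = Real.log (1+2*(1-u₃)) := by ring_nf
  have e4 : Real.log (2-0-u₃) = Real.log (1+(1-u₃)) := by ring_nf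
  have e5 : Real.log (3-2*0-u₃) = Real.log (2+(1-u₃)) := by ring_nf
  have e6 : Real.log (3-0-u₃) = Real.log (2+(1-u₃)) := by ring_nf
  rw [e1, e2, e3, e4, e5, e6, Mfun]
  ring

lemma lemN (c : ℝ) (hc : 0 < c) : HasDerivAt Nfun (Mfun c) c := by
  have d1 : (0:ℝ) < 1+c := by linarith
  have d2 : (0:ℝ) < 2+c := by linarith
  have d3 : (0:ℝ) < 1+2*c := by linarith
  have hid : HasDerivAt (fun y : ℝ => y) 1 c := hasDerivAt_id c
  have hp1 : HasDerivAt (fun y : ℝ => (y+y^2-y^3)/12) ((1+2*c^1*1-3*c^2*1)/12) c :=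
    ((hid.add (hid.pow 2)).sub (hid.pow 3)).div_const 12
  have hp2 : HasDerivAt (fun y : ℝ => (y^2/2+y^3/3)*Real.log 2)
      ((2*c^1*1/2+3*c^2*1/3)*Real.log 2) c :=
    (((hid.pow 2).div_const 2).add ((hid.pow 3).div_const 3)).mul_const (Real.log 2)
  have hp3 : HasDerivAt (fun y : ℝ => y^3/8*Real.log 3) (3*c^2*1/8*Real.log 3) c :=
    ((hid.pow 3).div_const 8).mul_const (Real.log 3)
  have hml : HasDerivAt (fun y : ℝ => y*Real.log y) (Real.log c + 1) c :=
    Real.hasDerivAt_mul_log (ne_of_gt hc)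
  have hp4 : HasDerivAt (fun y : ℝ => (y/2+5*y^2/24)*(y*Real.log y))
      ((1/2+5*(2*c^1*1)/24)*(c*Real.log c) + (c/2+5*c^2/24)*(Real.log c + 1)) c :=
    ((hid.div_const 2).add (((hid.pow 2).const_mul 5).div_const 24)).mul hml
  have hl1 : HasDerivAt (fun y : ℝ => Real.log (1+y)) (1/(1+c)) c := by
    have h : HasDerivAt (fun y : ℝ => 1+y) 1 c := by simpa using (hasDerivAt_id c).const_add 1
    exact h.log (ne_of_gt d1)
  have hl2 : HasDerivAt (fun y : ℝ => Real.log (2+y)) (1/(2+c)) c := by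
    have h : HasDerivAt (fun y : ℝ => 2+y) 1 c := by simpa using (hasDerivAt_id c).const_add 2
    exact h.log (ne_of_gt d2)
  have hl3 : HasDerivAt (fun y : ℝ => Real.log (1+2*y)) (2/(1+2*c)) c := by
    have h : HasDerivAt (fun y : ℝ => 1+2*y) 2 c := by
      simpa using ((hasDerivAt_id c).const_mul 2).const_add 1
    exact h.log (ne_of_gt d3)
  have hp5 : HasDerivAt (fun y : ℝ => (1/6-y^2/2-y^3/3)*Real.log (1+y))
      ((0-2*c^1*1/2-3*c^2*1/3)*Real.log (1+c) + (1/6-c^2/2-c^3/3)*(1/(1+c))) c := by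
    have := ((((hasDerivAt_const c (1/6:ℝ)).sub ((hid.pow 2).div_const 2)).sub
      ((hid.pow 3).div_const 3)).mul hl1)
    exact this
  have hp6 : HasDerivAt (fun y : ℝ => (y/2+y^2/2+y^3/8)*Real.log (2+y))
      ((1/2+2*c^1*1/2+3*c^2*1/8)*Real.log (2+c) + (c/2+c^2/2+c^3/8)*(1/(2+c))) c :=
    (((hid.div_const 2).add ((hid.pow 2).div_const 2)).add ((hid.pow 3).div_const 8)).mul hl2
  have hp7 : HasDerivAt (fun y : ℝ => (1+2*y)^2/8*Real.log (1+2*y))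
      ((2*(1+2*c)^1*2/8)*Real.log (1+2*c) + (1+2*c)^2/8*(2/(1+2*c))) c := by
    have hin : HasDerivAt (fun y : ℝ => 1+2*y) 2 c := by
      simpa using ((hasDerivAt_id c).const_mul 2).const_add 1
    have := ((hin.pow 2).div_const 8).mul hl3
    exact this
  have total := ((((((hp1.add hp2).sub hp3).add hp4).add hp5).add hp6).sub hp7)
  have hNe : Nfun = fun y : ℝ =>
      (y+y^2-y^3)/12 + (y^2/2+y^3/3)*Real.log 2 - y^3/8*Real.log 3
      + (y/2+5*y^2/24)*(y*Real.log y) + (1/6-y^2/2-y^3/3)*Real.log (1+y)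
      + (y/2+y^2/2+y^3/8)*Real.log (2+y) - (1+2*y)^2/8*Real.log (1+2*y) := rfl
  rw [hNe]
  refine total.congr_deriv ?_
  rw [Mfun]
  field_simp
  ring

lemma lemC : ∫ u in (0:ℝ)..1, Mfun (1-u) = Nfun 1 - Nfun 0 := by
  have hml : Continuous (fun u : ℝ => (1-u)*Real.log (1-u)) :=
    Real.continuous_mul_log.comp (continuous_const.sub continuous_id)
  have hcont : ContinuousOn (fun u : ℝ => -Nfun (1-u)) (Set.Icc 0 1) := by
    apply ContinuousOn.neg
    show ContinuousOn (fun u : ℝ =>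
      ((1-u)+(1-u)^2-(1-u)^3)/12 + ((1-u)^2/2+(1-u)^3/3)*Real.log 2 - (1-u)^3/8*Real.log 3
      + ((1-u)/2+5*(1-u)^2/24)*((1-u)*Real.log (1-u)) + (1/6-(1-u)^2/2-(1-u)^3/3)*Real.log (1+(1-u))
      + ((1-u)/2+(1-u)^2/2+(1-u)^3/8)*Real.log (2+(1-u)) - (1+2*(1-u))^2/8*Real.log (1+2*(1-u))) _
    apply ContinuousOn.sub
    apply ContinuousOn.add
    apply ContinuousOn.add
    apply ContinuousOn.add
    apply ContinuousOn.sub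
    apply ContinuousOn.add
    · fun_prop
    · fun_prop
    · fun_prop
    · exact ContinuousOn.mul (by fun_prop) hml.continuousOn
    · apply ContinuousOn.mul (by fun_prop)
      exact ContinuousOn.log (by fun_prop) (fun x hx => by have := hx.1; have := hx.2; intro h; nlinarith)
    · apply ContinuousOn.mul (by fun_prop)
      exact ContinuousOn.log (by fun_prop) (fun x hx => by have := hx.1; have := hx.2; intro h; nlinarith)
    · apply ContinuousOn.mul (by fun_prop)
      exact ContinuousOn.log (by fun_prop) (fun x hx => by have := hx.1; have := hx.2; intro h; nlinarith)
  have hderiv : ∀ x ∈ Set.Ioo (0:ℝ) 1, HasDerivAt (fun u : ℝ => -Nfun (1-u)) (Mfun (1-x)) x := by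
    intro x hx
    have h := (lemN (1-x) (by linarith [hx.2])).comp x
      (show HasDerivAt (fun u : ℝ => 1-u) (-1) x by simpa using (hasDerivAt_id x).const_sub 1)
    have h2 := h.neg
    refine h2.congr_deriv ?_
    ring
  have hint : IntervalIntegrable (fun u : ℝ => Mfun (1-u)) MeasureTheory.volume 0 1 := by
    apply ContinuousOn.intervalIntegrable
    rw [Set.uIcc_of_le zero_le_one]
    show ContinuousOn (fun u : ℝ =>
      (1-u)/4 - (1-u)^2/4 + ((1-u)+(1-u)^2)*Real.log 2 - 3*(1-u)^2/8*Real.log 3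
      + (1+5*(1-u)/8)*((1-u)*Real.log (1-u))
      - (1-u)*(1+(1-u))*Real.log (1+(1-u)) + (1/2+(1-u)+3*(1-u)^2/8)*Real.log (2+(1-u))
      - (1+2*(1-u))/2*Real.log (1+2*(1-u))) _
    apply ContinuousOn.sub
    apply ContinuousOn.add
    apply ContinuousOn.sub
    apply ContinuousOn.add
    apply ContinuousOn.sub
    apply ContinuousOn.add
    apply ContinuousOn.sub
    · fun_prop
    · fun_prop
    · fun_prop
    · fun_prop
    · exact ContinuousOn.mul (by fun_prop) hml.continuousOn
    · apply ContinuousOn.mul (by fun_prop)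
      exact ContinuousOn.log (by fun_prop) (fun x hx => by have := hx.1; have := hx.2; intro h; nlinarith)
    · apply ContinuousOn.mul (by fun_prop)
      exact ContinuousOn.log (by fun_prop) (fun x hx => by have := hx.1; have := hx.2; intro h; nlinarith)
    · apply ContinuousOn.mul (by fun_prop)
      exact ContinuousOn.log (by fun_prop) (fun x hx => by have := hx.1; have := hx.2; intro h; nlinarith)
  have := intervalIntegral.integral_eq_sub_of_hasDerivAt_of_le zero_le_one hcont hderiv hint
  rw [this]
  norm_num
  ring

/-- The limiting density of the pattern `123` for the Luce permuton with Sukhatme weights: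
`6 ∫_{0<u₁<u₂<u₃<1} [(1-u₁)/((1-u₁)+(1-u₂)+(1-u₃))]·[(1-u₂)/((1-u₂)+(1-u₃))] du
  = (1/4)(2 - log (27/16))`. -/
theorem luce_sukhatme_pattern123_density :
    6 * ∫ u₃ in (0:ℝ)..1, ∫ u₂ in (0:ℝ)..u₃, ∫ u₁ in (0:ℝ)..u₂,
        ((1 - u₁) / ((1 - u₁) + (1 - u₂) + (1 - u₃))) *
          ((1 - u₂) / ((1 - u₂) + (1 - u₃)))
      = (1 / 4) * (2 - Real.log (27 / 16)) := by
  have key : (∫ u₃ in (0:ℝ)..1, ∫ u₂ in (0:ℝ)..u₃, ∫ u₁ in (0:ℝ)..u₂,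
        ((1 - u₁) / ((1 - u₁) + (1 - u₂) + (1 - u₃))) *
          ((1 - u₂) / ((1 - u₂) + (1 - u₃))))
      = ∫ u in (0:ℝ)..1, Mfun (1-u) := by
    apply intervalIntegral.integral_congr_ae
    have h1 : ∀ᵐ x : ℝ, x ≠ (1:ℝ) := by
      rw [MeasureTheory.ae_iff]
      simp only [ne_eq, not_not]
      show MeasureTheory.volume {x : ℝ | x = 1} = 0
      simp [Set.setOf_eq_eq_singleton]
    filter_upwards [h1] with x hx hmem
    rw [Set.uIoc_of_le zero_le_one] at hmem
    obtain ⟨hx0, hx1⟩ := hmem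
    have hx1' : x < 1 := lt_of_le_of_ne hx1 hx
    rw [← lemB x hx0.le hx1']
    apply intervalIntegral.integral_congr
    intro y hy
    rw [Set.uIcc_of_le hx0.le] at hy
    exact lemA y x hy.1 hy.2 hx1'
  rw [key, lemC]
  have hN1 : Nfun 1 - Nfun 0 = 1/12 + (1/6)*Real.log 2 - (1/8)*Real.log 3 := by
    rw [Nfun, Nfun]
    norm_num
    ring
  rw [hN1]
  have h27 : Real.log (27/16) = 3*Real.log 3 - 4*Real.log 2 := by
    rw [show (27:ℝ)/16 = 3^3/2^4 by norm_num,
      Real.log_div (by positivity) (by positivity), Real.log_pow, Real.log_pow]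
    push_cast
    ring
  rw [h27]
  ring
end

section
/- Let σₙ be a Luce-distributed permutation with weights θ₁,…,θₙ, realized via independent exponentials E₁,…,Eₙ with rates θ₁,…,θₙ through σₙ(i) = #{j : E_j ≤ E_i}. Then for a fixed pattern π of size k, the expected number of consecutive occurrences satisfies E[cocc(π,σₙ)] = Σ_{i=0}^{n-k} p(θ_{i+π⁻¹(1)},…,θ_{i+π⁻¹(k)}), where p(x₁,…,x_k) = ∏_j x_j/(x_j+⋯+x_k). -/
open MeasureTheory ProbabilityTheory Finset

/-- Auxiliary coercion of a natural number into `Fin n` (defaulting to `0` out of range). -/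
def finOf (n : ℕ) (hn : 0 < n) (m : ℕ) : Fin n :=
  if h : m < n then ⟨m, h⟩ else ⟨0, hn⟩

/-- The rank of position `m` in the sample `e`: `σₙ(m) = #{j : e j ≤ e m}`. -/
noncomputable def luceRank (n : ℕ) (hn : 0 < n) (e : Fin n → ℝ) (m : ℕ) : ℕ :=
  (Finset.univ.filter fun j : Fin n => e j ≤ e (finOf n hn m)).card

/-- The number of consecutive occurrences of the pattern `π` in the permutation induced by the
sample `e`: the number of windows `[i+1, i+k]` on which the induced values are in the same
relative order as `π`. -/
noncomputable def luceCocc (n k : ℕ) (hn : 0 < n) (π : Equiv.Perm (Fin k)) (e : Fin n → ℝ) : ℕ :=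
  ((Finset.range (n - k + 1)).filter fun i =>
    ∀ a b : Fin k,
      (π a < π b ↔ luceRank n hn e (i + a) < luceRank n hn e (i + b))).card

open scoped ENNReal NNReal

section Aux
open Real Set

lemma measurableSet_strictMono {m : ℕ} :
    MeasurableSet {z : Fin m → ℝ | StrictMono z} := by
  have : {z : Fin m → ℝ | StrictMono z}
      = ⋂ (a : Fin m) (b : Fin m) (_ : a < b), {z : Fin m → ℝ | z a < z b} := by
    ext z; simp [StrictMono, Set.mem_iInter]
  rw [this]
  exact MeasurableSet.iInter fun a => MeasurableSet.iInter fun b =>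
    MeasurableSet.iInter fun _ => measurableSet_lt (measurable_pi_apply a) (measurable_pi_apply b)

lemma strictMono_snoc_iff {k : ℕ} (z : Fin k → ℝ) (y : ℝ) :
    StrictMono (Fin.snoc z y : Fin (k+1) → ℝ) ↔ StrictMono z ∧ ∀ j, z j < y := by
  constructor
  · intro h
    refine ⟨fun a b hab => ?_, fun j => ?_⟩
    · have := h (Fin.castSucc_lt_castSucc_iff.2 hab)
      simpa using this
    · have := h (Fin.castSucc_lt_last j)
      simpa using this
  · rintro ⟨hz, hy⟩ a b hab
    rcases Fin.eq_castSucc_or_eq_last b with ⟨b', rfl⟩ | rfl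
    · rcases Fin.eq_castSucc_or_eq_last a with ⟨a', rfl⟩ | rfl
      · simpa using hz (Fin.castSucc_lt_castSucc_iff.1 hab)
      · exact absurd hab (by simpa using (Fin.castSucc_lt_last b').not_gt)
    · rcases Fin.eq_castSucc_or_eq_last a with ⟨a', rfl⟩ | rfl
      · simpa using hy a'
      · exact absurd hab (lt_irrefl _)


lemma expMeasure_eq (r : ℝ) :
    expMeasure r = MeasureTheory.volume.withDensity (exponentialPDF r) := rfl

-- integral over Ioi a (a ≥ 0) of r * exp(-(b*y))
lemma real_exp_integral {b : ℝ} (hb : 0 < b) (a : ℝ) :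
    ∫ y in Ioi a, Real.exp (-(b * y)) = Real.exp (-(b * a)) / b := by
  have hderiv : ∀ x ∈ Ici a, HasDerivAt (fun x => -Real.exp (-(b * x)) / b)
      (Real.exp (-(b * x))) x := by
    intro x _
    have h1 : HasDerivAt (fun x : ℝ => -(b * x)) (-b) x := by
      simpa using ((hasDerivAt_id x).const_mul (-b))
    have h2 := (h1.exp).div_const b
    convert h2.neg using 1
    · rfl
    · rfl
    · funext y; simp [neg_div]
    · field_simp
  have hint : IntegrableOn (fun x => Real.exp (-(b * x))) (Ioi a) := by
    have := exp_neg_integrableOn_Ioi a hb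
    simpa [neg_mul] using this
  have hlim : Filter.Tendsto (fun x => -Real.exp (-(b * x)) / b) Filter.atTop (nhds 0) := by
    have : Filter.Tendsto (fun x : ℝ => Real.exp (-(b * x))) Filter.atTop (nhds 0) := by
      simpa [neg_mul] using Real.tendsto_exp_comp_nhds_zero.2
        (Filter.Tendsto.const_mul_atTop_of_neg (neg_neg_iff_pos.2 hb) Filter.tendsto_id)
    simpa using (this.neg.div_const b)
  have := integral_Ioi_of_hasDerivAt_of_tendsto' hderiv hint hlim
  rw [this]; field_simp; ring

lemma exp_lint {r s : ℝ} (hr : 0 < r) (hs : 0 ≤ s) (c : ℝ) :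
    ∫⁻ y in Ioi c, ENNReal.ofReal (Real.exp (-(s * max y 0))) ∂expMeasure r
      = ENNReal.ofReal (r / (s + r) * Real.exp (-((s + r) * max c 0))) := by
  have hsr : 0 < s + r := by linarith
  rw [expMeasure_eq, setLIntegral_withDensity_eq_setLIntegral_mul _
    (by exact (measurable_exponentialPDFReal r).ennreal_ofReal : Measurable (exponentialPDF r))
    (by fun_prop) measurableSet_Ioi]
  have hae : ∀ᵐ y ∂(volume.restrict (Ioi c)),
      (exponentialPDF r * fun y => ENNReal.ofReal (Real.exp (-(s * max y 0)))) y
        = (Ioi (0:ℝ)).indicator (fun y => ENNReal.ofReal (r * Real.exp (-((s + r) * y)))) y := by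
    have h0 : ∀ᵐ (y : ℝ) ∂(volume : Measure ℝ), y ≠ 0 := by
      rw [ae_iff]; simpa [Set.setOf_eq_eq_singleton] using measure_singleton (0:ℝ)
    filter_upwards [ae_restrict_of_ae h0] with y hy
    rcases lt_trichotomy y 0 with h | h | h
    · simp [exponentialPDF_of_neg h, Set.indicator_of_notMem (by simpa using h.le.not_gt :
        y ∉ Ioi (0:ℝ))]
    · exact absurd h hy
    · rw [Set.indicator_of_mem (by simpa using h), Pi.mul_apply,
        exponentialPDF_of_nonneg h.le, max_eq_left h.le,
        ← ENNReal.ofReal_mul (by positivity)]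
      congr 1
      rw [mul_assoc, ← Real.exp_add]
      ring_nf
  rw [lintegral_congr_ae hae, lintegral_indicator measurableSet_Ioi]
  rw [Measure.restrict_restrict measurableSet_Ioi, Set.Ioi_inter_Ioi, sup_comm]
  rw [← ofReal_integral_eq_lintegral_ofReal]
  · rw [MeasureTheory.integral_const_mul, real_exp_integral hsr]
    congr 1
    ring
  · refine Integrable.const_mul ?_ r
    have h1 := exp_neg_integrableOn_Ioi (c ⊔ 0) hsr
    have h2 : ∀ x : ℝ, -(s + r) * x = -((s + r) * x) := fun x => by ring
    simpa only [h2, IntegrableOn] using h1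
  · filter_upwards with y
    positivity

lemma exp_lint_univ {r s : ℝ} (hr : 0 < r) (hs : 0 ≤ s) :
    ∫⁻ y, ENNReal.ofReal (Real.exp (-(s * max y 0))) ∂expMeasure r
      = ENNReal.ofReal (r / (s + r)) := by
  have hnull : expMeasure r (Iic (-1:ℝ)) = 0 := by
    rw [expMeasure_eq, withDensity_apply _ measurableSet_Iic]
    rw [setLIntegral_congr_fun_ae measurableSet_Iic
      (ae_of_all _ (fun y (hy : y ≤ -1) => exponentialPDF_of_neg (by linarith)))]
    simp
  rw [← lintegral_add_compl (μ := expMeasure r)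
    (f := fun y => ENNReal.ofReal (Real.exp (-(s * max y 0)))) (measurableSet_Ioi (a := (-1:ℝ)))]
  rw [Set.compl_Ioi, Measure.restrict_eq_zero.2 hnull, lintegral_zero_measure, add_zero]
  rw [exp_lint hr hs (-1)]
  norm_num

lemma Ici_castSucc_eq {k : ℕ} (j : Fin (k+1)) :
    Finset.Ici (Fin.castSucc j) = insert (Fin.last (k+1)) ((Finset.Ici j).map Fin.castSuccEmb) := by
  ext l
  simp only [Finset.mem_Ici, Finset.mem_insert, Finset.mem_map, Fin.coe_castSuccEmb]
  constructor
  · intro hl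
    rcases Fin.eq_castSucc_or_eq_last l with ⟨m, rfl⟩ | rfl
    · exact Or.inr ⟨m, Fin.castSucc_le_castSucc_iff.1 hl, rfl⟩
    · exact Or.inl rfl
  · rintro (rfl | ⟨m, hm, rfl⟩)
    · exact Fin.le_last _
    · exact Fin.castSucc_le_castSucc_iff.2 hm

lemma sum_Ici_castSucc {k : ℕ} (r : Fin (k+2) → ℝ) (j : Fin (k+1)) :
    ∑ l ∈ Finset.Ici (Fin.castSucc j), r l
      = r (Fin.last (k+1)) + ∑ l ∈ Finset.Ici j, r (Fin.castSucc l) := by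
  rw [Ici_castSucc_eq, Finset.sum_insert (by
    simp only [Finset.mem_map, Fin.coe_castSuccEmb]
    rintro ⟨m, _, hm⟩
    exact (Fin.castSucc_lt_last m).ne hm), Finset.sum_map]
  rfl

lemma Ici_last_eq {k : ℕ} : Finset.Ici (Fin.last k) = {Fin.last k} := by
  ext l; simp [Finset.mem_Ici, Fin.last_le_iff, eq_comm]

lemma keyG : ∀ (k : ℕ) (r : Fin (k+1) → ℝ), (∀ j, 0 < r j) → ∀ s : ℝ, 0 ≤ s →
    ∫⁻ z : Fin (k+1) → ℝ,
      ({z : Fin (k+1) → ℝ | StrictMono z}.indicator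
        (fun z => ENNReal.ofReal (Real.exp (-(s * max (z (Fin.last k)) 0)))) z)
      ∂(Measure.pi fun j => expMeasure (r j))
    = ENNReal.ofReal (∏ j, r j / (s + ∑ l ∈ Finset.Ici j, r l)) := by
  intro k
  induction k with
  | zero =>
    intro r hr s hs
    have huniv : {z : Fin 1 → ℝ | StrictMono z} = Set.univ := by
      ext z
      simp only [Set.mem_setOf_eq, Set.mem_univ, iff_true]
      intro a b hab
      exact absurd (Subsingleton.elim a b) hab.ne
    rw [huniv, Set.indicator_univ]
    have hmp := measurePreserving_piUnique (fun j : Fin 1 => expMeasure (r j))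
    have hlc := hmp.lintegral_comp
      (f := fun y : ℝ => ENNReal.ofReal (Real.exp (-(s * max y 0)))) (by fun_prop)
    have heq : ∀ z : Fin 1 → ℝ,
        (MeasurableEquiv.piUnique (fun _ : Fin 1 => ℝ)) z = z (Fin.last 0) := fun z => rfl
    simp only [heq] at hlc
    rw [hlc, exp_lint_univ (hr _) hs]
    have : (default : Fin 1) = Fin.last 0 := rfl
    rw [this]
    congr 1
    rw [Fin.prod_univ_one]
    have h0 : (0 : Fin 1) = Fin.last 0 := rfl
    rw [h0, Ici_last_eq, Finset.sum_singleton]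
  | succ k IH =>
    intro r hr s hs
    haveI : ∀ j : Fin (k+2), IsProbabilityMeasure (expMeasure (r j)) :=
      fun j => isProbabilityMeasure_expMeasure (hr j)
    set rl := r (Fin.last (k+1)) with hrl
    have hrlpos : 0 < rl := hr _
    have hs' : 0 ≤ s + rl := by linarith
    set F : (Fin (k+2) → ℝ) → ℝ≥0∞ := fun z =>
      ({z : Fin (k+2) → ℝ | StrictMono z}.indicator
        (fun z => ENNReal.ofReal (Real.exp (-(s * max (z (Fin.last (k+1))) 0)))) z) with hF
    have hFmeas : Measurable F :=
      Measurable.indicator (by fun_prop) measurableSet_strictMono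
    set e := MeasurableEquiv.piFinSuccAbove (fun _ : Fin (k+2) => ℝ) (Fin.last (k+1)) with he
    have hmp := (measurePreserving_piFinSuccAbove (fun j => expMeasure (r j))
      (Fin.last (k+1))).symm e
    have hlc := hmp.lintegral_comp (f := F) hFmeas
    rw [← hlc]
    have hsymm : ∀ (y : ℝ) (z : Fin (k+1) → ℝ), e.symm (y, z) = Fin.snoc z y := by
      intro y z
      exact Fin.insertNth_last' y z
    rw [lintegral_prod_symm (fun a => F (e.symm a)) ((hFmeas.comp e.symm.measurable).aemeasurable)]
    simp only [hsymm]
    -- inner integral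
    have hinner : ∀ z : Fin (k+1) → ℝ,
        (∫⁻ y, F (Fin.snoc z y) ∂expMeasure rl)
          = ({z : Fin (k+1) → ℝ | StrictMono z}.indicator
              (fun z => ENNReal.ofReal (rl / (s + rl) *
                Real.exp (-((s + rl) * max (z (Fin.last k)) 0)))) z) := by
      intro z
      by_cases hz : StrictMono z
      · have hpt : ∀ y : ℝ, F (Fin.snoc z y)
            = (Set.Ioi (z (Fin.last k))).indicator
                (fun y => ENNReal.ofReal (Real.exp (-(s * max y 0)))) y := by
          intro y
          show ({w : Fin (k+2) → ℝ | StrictMono w}.indicator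
            (fun w => ENNReal.ofReal (Real.exp (-(s * max (w (Fin.last (k+1))) 0))))
            (Fin.snoc z y)) = _
          by_cases hy : z (Fin.last k) < y
          · rw [Set.indicator_of_mem (show Fin.snoc z y ∈ {w : Fin (k+2) → ℝ | StrictMono w} from
                (strictMono_snoc_iff z y).2
                  ⟨hz, fun j => lt_of_le_of_lt (hz.monotone (Fin.le_last j)) hy⟩),
              Set.indicator_of_mem (show y ∈ Set.Ioi (z (Fin.last k)) from hy), Fin.snoc_last]
          · rw [Set.indicator_of_notMem
                (show Fin.snoc z y ∉ {w : Fin (k+2) → ℝ | StrictMono w} from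
                  fun hmem => hy (((strictMono_snoc_iff z y).1 hmem).2 _)),
              Set.indicator_of_notMem (show y ∉ Set.Ioi (z (Fin.last k)) by simpa using hy)]
        rw [lintegral_congr hpt, lintegral_indicator measurableSet_Ioi,
          exp_lint hrlpos hs (z (Fin.last k)),
          Set.indicator_of_mem (show z ∈ {w : Fin (k+1) → ℝ | StrictMono w} from hz)]
      · rw [Set.indicator_of_notMem
          (show z ∉ {w : Fin (k+1) → ℝ | StrictMono w} from hz)]
        have hpt : ∀ y : ℝ, F (Fin.snoc z y) = 0 := by
          intro y
          show ({w : Fin (k+2) → ℝ | StrictMono w}.indicator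
            (fun w => ENNReal.ofReal (Real.exp (-(s * max (w (Fin.last (k+1))) 0))))
            (Fin.snoc z y)) = _
          rw [Set.indicator_of_notMem]
          intro hmem
          exact hz ((strictMono_snoc_iff z y).1 hmem).1
        simp only [hpt, lintegral_zero]
    calc ∫⁻ z, (∫⁻ y, F (Fin.snoc z y) ∂expMeasure (r (Fin.last (k+1))))
          ∂(Measure.pi fun j => expMeasure (r ((Fin.last (k+1)).succAbove j)))
        = ∫⁻ z, ({z : Fin (k+1) → ℝ | StrictMono z}.indicator
              (fun z => ENNReal.ofReal (rl / (s + rl)) * ENNReal.ofReal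
                (Real.exp (-((s + rl) * max (z (Fin.last k)) 0)))) z)
          ∂(Measure.pi fun j => expMeasure (r (Fin.castSucc j))) := by
          simp only [Fin.succAbove_last, ← hrl]
          refine lintegral_congr fun z => ?_
          rw [hinner z]
          by_cases hz : StrictMono z
          · rw [Set.indicator_of_mem (show z ∈ {w : Fin (k+1) → ℝ | StrictMono w} from hz),
              Set.indicator_of_mem (show z ∈ {w : Fin (k+1) → ℝ | StrictMono w} from hz),
              ENNReal.ofReal_mul (by positivity)]
          · rw [Set.indicator_of_notMem (show z ∉ {w : Fin (k+1) → ℝ | StrictMono w} from hz),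
              Set.indicator_of_notMem (show z ∉ {w : Fin (k+1) → ℝ | StrictMono w} from hz)]
      _ = ENNReal.ofReal (rl / (s + rl)) *
            ∫⁻ z, ({z : Fin (k+1) → ℝ | StrictMono z}.indicator
              (fun z => ENNReal.ofReal
                (Real.exp (-((s + rl) * max (z (Fin.last k)) 0)))) z)
          ∂(Measure.pi fun j => expMeasure (r (Fin.castSucc j))) := by
          rw [← lintegral_const_mul _ (Measurable.indicator (by fun_prop)
            measurableSet_strictMono)]
          refine lintegral_congr fun z => ?_
          rw [Set.indicator_const_mul]
      _ = ENNReal.ofReal (rl / (s + rl)) * ENNReal.ofReal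
            (∏ j : Fin (k+1), r (Fin.castSucc j) /
              ((s + rl) + ∑ l ∈ Finset.Ici j, r (Fin.castSucc l))) := by
          rw [IH (fun j => r (Fin.castSucc j)) (fun j => hr _) (s + rl) hs']
      _ = ENNReal.ofReal (∏ j : Fin (k+2), r j / (s + ∑ l ∈ Finset.Ici j, r l)) := by
          rw [← ENNReal.ofReal_mul (by positivity)]
          congr 1
          rw [Fin.prod_univ_castSucc
            (f := fun j : Fin (k+2) => r j / (s + ∑ l ∈ Finset.Ici j, r l))]
          rw [Ici_last_eq, Finset.sum_singleton, ← hrl]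
          rw [mul_comm]
          congr 1
          refine Finset.prod_congr rfl fun j _ => ?_
          rw [sum_Ici_castSucc]
          ring_nf
          rw [hrl]; ring


lemma pi_map_comp {n k : ℕ} (μ : Fin n → Measure ℝ) [∀ i, IsProbabilityMeasure (μ i)]
    (ρ : Fin k → Fin n) (hρ : Function.Injective ρ) {S : Set (Fin k → ℝ)}
    (hS : MeasurableSet S) :
    Measure.pi μ ((fun e (j : Fin k) => e (ρ j)) ⁻¹' S) = Measure.pi (fun j => μ (ρ j)) S := by
  classical
  set p : Fin n → Prop := fun i => i ∈ Set.range ρ with hp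
  set g : Fin k ≃ Set.range ρ := Equiv.ofInjective ρ hρ with hg
  set E1 := MeasurableEquiv.piEquivPiSubtypeProd (fun _ : Fin n => ℝ) p with hE1
  set E2 := MeasurableEquiv.piCongrLeft (fun _ : Subtype p => ℝ) g with hE2
  have h1 := measurePreserving_piEquivPiSubtypeProd (fun i => μ i) p
  have h2 := measurePreserving_piCongrLeft (fun i : Subtype p => μ i) g
  have hT : (fun e (j : Fin k) => e (ρ j))
      = fun e => E2.symm ((E1 e).1) := by
    funext e
    funext j
    rfl
  rw [hT]
  have hW : MeasurableSet (E2.symm ⁻¹' S) := E2.symm.measurable hS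
  have : (fun e => E2.symm ((E1 e).1)) ⁻¹' S
      = E1 ⁻¹' (Prod.fst ⁻¹' (E2.symm ⁻¹' S)) := rfl
  rw [this, h1.measure_preimage (hW.preimage measurable_fst).nullMeasurableSet]
  have hfst : (Prod.fst ⁻¹' (E2.symm ⁻¹' S) :
      Set ((∀ _ : Subtype p, ℝ) × (∀ _ : {i // ¬ p i}, ℝ)))
      = (E2.symm ⁻¹' S) ×ˢ Set.univ := by
    ext x; simp
  rw [hfst, Measure.prod_prod, measure_univ, mul_one]
  have h2' := (h2.symm E2).measure_preimage hS.nullMeasurableSet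
  convert h2' using 2
  congr 1
  exact Subsingleton.elim _ _
  rfl

end Aux

lemma luceRank_lt_iff (n : ℕ) (hn : 0 < n) (e : Fin n → ℝ) (m m' : ℕ) :
    luceRank n hn e m < luceRank n hn e m' ↔ e (finOf n hn m) < e (finOf n hn m') := by
  have hmono : ∀ a b : ℕ, e (finOf n hn a) ≤ e (finOf n hn b) →
      luceRank n hn e a ≤ luceRank n hn e b := by
    intro a b hab
    exact Finset.card_le_card (fun j hj => by
      simp only [Finset.mem_filter, Finset.mem_univ, true_and] at hj ⊢
      exact hj.trans hab)
  constructor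
  · intro h
    by_contra hle
    push_neg at hle
    exact absurd (hmono m' m hle) h.not_ge
  · intro h
    refine Finset.card_lt_card ⟨fun j hj => ?_, fun hsub => ?_⟩
    · simp only [Finset.mem_filter, Finset.mem_univ, true_and] at hj ⊢
      exact hj.trans h.le
    · have hmem : finOf n hn m' ∈ Finset.univ.filter
          (fun j => e j ≤ e (finOf n hn m')) := by
        simp only [Finset.mem_filter, Finset.mem_univ, true_and]
        exact le_refl _
      have := hsub hmem
      simp only [Finset.mem_filter, Finset.mem_univ, true_and] at this
      exact absurd this h.not_ge

/-- For a Luce-distributed permutation realized via independent exponentials with rates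
`θ 1, …, θ n`, the expected number of consecutive occurrences of a pattern `π` of size `k` is
`∑_{i=0}^{n-k} p(θ_{i+π⁻¹(1)}, …, θ_{i+π⁻¹(k)})` where
`p(x₁,…,x_k) = ∏ⱼ xⱼ/(xⱼ+⋯+x_k)`. -/
theorem expected_consecutive_occurrences (n k : ℕ) (hk : 1 ≤ k) (hkn : k ≤ n)
    (hn : 0 < n) (θ : Fin n → ℝ) (hθ : ∀ i, 0 < θ i) (π : Equiv.Perm (Fin k)) :
    ∫ e : Fin n → ℝ, (luceCocc n k hn π e : ℝ)
        ∂(Measure.pi fun i => expMeasure (θ i))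
      = ∑ i ∈ Finset.range (n - k + 1), ∏ j : Fin k,
          θ (finOf n hn (i + π.symm j)) /
            ∑ l ∈ Finset.Ici j, θ (finOf n hn (i + π.symm l)) := by
  classical
  haveI : ∀ i, IsProbabilityMeasure (expMeasure (θ i)) :=
    fun i => isProbabilityMeasure_expMeasure (hθ i)
  set T : ℕ → (Fin n → ℝ) → (Fin k → ℝ) :=
    fun i e j => e (finOf n hn (i + (π.symm j : ℕ))) with hT
  have hTmeas : ∀ i, Measurable (T i) :=
    fun i => measurable_pi_lambda _ fun j => measurable_pi_apply _
  have hSmeas : ∀ i : ℕ, MeasurableSet {e : Fin n → ℝ | StrictMono (T i e)} :=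
    fun i => hTmeas i measurableSet_strictMono
  have hcond : ∀ (i : ℕ) (e : Fin n → ℝ),
      (∀ a b : Fin k, (π a < π b ↔ luceRank n hn e (i + a) < luceRank n hn e (i + b)))
        ↔ StrictMono (T i e) := by
    intro i e
    constructor
    · intro h c d hcd
      have h2 := (h (π.symm c) (π.symm d)).1 (by simpa using hcd)
      exact (luceRank_lt_iff n hn e _ _).1 h2
    · intro h a b
      have hval : ∀ a b : Fin k, π a < π b →
          e (finOf n hn (i + (a : ℕ))) < e (finOf n hn (i + (b : ℕ))) := by
        intro a b hab
        have := h hab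
        simpa [hT] using this
      constructor
      · intro hab
        exact (luceRank_lt_iff n hn e _ _).2 (hval a b hab)
      · intro hrank
        have hv := (luceRank_lt_iff n hn e _ _).1 hrank
        rcases lt_trichotomy (π a) (π b) with hlt | heq | hgt
        · exact hlt
        · exact absurd hv (by rw [π.injective heq]; exact lt_irrefl _)
        · exact absurd hv (hval b a hgt).asymm
  have hcocc : ∀ e : Fin n → ℝ, (luceCocc n k hn π e : ℝ)
      = ∑ i ∈ Finset.range (n - k + 1),
          Set.indicator {e : Fin n → ℝ | StrictMono (T i e)} 1 e := by
    intro e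
    rw [luceCocc, Finset.card_filter]
    push_cast
    refine Finset.sum_congr rfl fun i _ => ?_
    rw [Set.indicator_apply]
    by_cases h : ∀ a b : Fin k,
        (π a < π b ↔ luceRank n hn e (i + a) < luceRank n hn e (i + b))
    · rw [if_pos h, if_pos (by exact (hcond i e).1 h)]
      simp
    · rw [if_neg h, if_neg (by
        intro hmem
        exact h ((hcond i e).2 hmem))]
  obtain ⟨k', rfl⟩ : ∃ k', k = k' + 1 := ⟨k - 1, (Nat.succ_pred_eq_of_pos hk).symm⟩
  simp only [hcocc]
  rw [integral_finset_sum (f := fun i => Set.indicator {e : Fin n → ℝ | StrictMono (T i e)} 1)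
    _ (fun i _ => (integrable_const (1:ℝ)).indicator (hSmeas i))]
  refine Finset.sum_congr rfl fun i hi => ?_
  have hi' : i ≤ n - (k' + 1) := Nat.lt_succ_iff.1 (Finset.mem_range.1 hi)
  have hlt : ∀ a : Fin (k' + 1), i + (a : ℕ) < n := fun a => by
    have := a.isLt; omega
  set ρ : Fin (k' + 1) → Fin n := fun j => finOf n hn (i + (π.symm j : ℕ)) with hρ
  have hfin : ∀ a : Fin (k' + 1), finOf n hn (i + (a : ℕ)) = ⟨i + (a : ℕ), hlt a⟩ :=
    fun a => dif_pos (hlt a)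
  have hρinj : Function.Injective ρ := by
    intro a b hab
    rw [hρ] at hab
    simp only [hfin] at hab
    have h1 : i + ((π.symm a : Fin (k'+1)) : ℕ) = i + ((π.symm b : Fin (k'+1)) : ℕ) :=
      congrArg Fin.val hab
    exact π.symm.injective (Fin.ext (Nat.add_left_cancel h1))
  rw [MeasureTheory.integral_indicator_one (hSmeas i)]
  have hTi : T i = fun e (j : Fin (k' + 1)) => e (ρ j) := rfl
  have hpre : {e : Fin n → ℝ | StrictMono (T i e)}
      = (fun e (j : Fin (k' + 1)) => e (ρ j)) ⁻¹' {z : Fin (k' + 1) → ℝ | StrictMono z} := rfl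
  rw [hpre, measureReal_def, pi_map_comp (fun i => expMeasure (θ i)) ρ hρinj measurableSet_strictMono]
  have hkey := keyG k' (fun j => θ (ρ j)) (fun j => hθ _) 0 le_rfl
  have hμ : Measure.pi (fun j => expMeasure (θ (ρ j))) {z : Fin (k'+1) → ℝ | StrictMono z}
      = ENNReal.ofReal (∏ j, θ (ρ j) / (0 + ∑ l ∈ Finset.Ici j, θ (ρ l))) := by
    rw [← hkey, ← lintegral_indicator_one measurableSet_strictMono]
    refine lintegral_congr fun z => ?_
    by_cases hz : z ∈ {z : Fin (k'+1) → ℝ | StrictMono z}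
    · rw [Set.indicator_of_mem hz, Set.indicator_of_mem hz]
      simp
    · rw [Set.indicator_of_notMem hz, Set.indicator_of_notMem hz]
  rw [hμ, ENNReal.toReal_ofReal (Finset.prod_nonneg fun j _ =>
    div_nonneg (hθ _).le (add_nonneg le_rfl (Finset.sum_nonneg fun l _ => (hθ _).le)))]
  refine Finset.prod_congr rfl fun j _ => ?_
  rw [zero_add]
end

section
/- For exponential Sukhatme weights with parameter α > 0, the limiting consecutive pattern densities of size 3 satisfy: Λ(123) = α³/((α+1)(α²+α+1)), Λ(132) = α²/((α+1)(α²+α+1)), Λ(213) = α³/((α²+1)(α²+α+1)), Λ(312) = α/((α²+1)(α²+α+1)), Λ(231) = α/((α+1)(α²+α+1)), Λ(321) = 1/((α+1)(α²+α+1)), and these six quantities sum to 1. -/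
/-- The Luce probability `p(x₁,x₂,x₃) = x₁/(x₁+x₂+x₃) · x₂/(x₂+x₃)` of drawing first `x₁`
then `x₂` then `x₃`. -/
noncomputable def luceP3 (x y z : ℝ) : ℝ := x / (x + y + z) * (y / (y + z))

/-- For exponential Sukhatme weights with parameter `α > 0`, the six limiting consecutive
pattern densities of size 3 are
`Λ(π) = p(α^{-π⁻¹(1)}, α^{-π⁻¹(2)}, α^{-π⁻¹(3)})` as listed, and they sum to `1`. -/
theorem exp_sukhatme_size3_densities (α : ℝ) (hα : 0 < α) :
    luceP3 (α ^ (-1 : ℤ)) (α ^ (-2 : ℤ)) (α ^ (-3 : ℤ))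
        = α ^ 3 / ((α + 1) * (α ^ 2 + α + 1)) ∧
    luceP3 (α ^ (-1 : ℤ)) (α ^ (-3 : ℤ)) (α ^ (-2 : ℤ))
        = α ^ 2 / ((α + 1) * (α ^ 2 + α + 1)) ∧
    luceP3 (α ^ (-2 : ℤ)) (α ^ (-1 : ℤ)) (α ^ (-3 : ℤ))
        = α ^ 3 / ((α ^ 2 + 1) * (α ^ 2 + α + 1)) ∧
    luceP3 (α ^ (-2 : ℤ)) (α ^ (-3 : ℤ)) (α ^ (-1 : ℤ))
        = α / ((α ^ 2 + 1) * (α ^ 2 + α + 1)) ∧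
    luceP3 (α ^ (-3 : ℤ)) (α ^ (-1 : ℤ)) (α ^ (-2 : ℤ))
        = α / ((α + 1) * (α ^ 2 + α + 1)) ∧
    luceP3 (α ^ (-3 : ℤ)) (α ^ (-2 : ℤ)) (α ^ (-1 : ℤ))
        = 1 / ((α + 1) * (α ^ 2 + α + 1)) ∧
    α ^ 3 / ((α + 1) * (α ^ 2 + α + 1)) + α ^ 2 / ((α + 1) * (α ^ 2 + α + 1)) +
      α ^ 3 / ((α ^ 2 + 1) * (α ^ 2 + α + 1)) + α / ((α ^ 2 + 1) * (α ^ 2 + α + 1)) +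
      α / ((α + 1) * (α ^ 2 + α + 1)) + 1 / ((α + 1) * (α ^ 2 + α + 1)) = 1 := by
  have hne : α ≠ 0 := hα.ne'
  have h1 : α + 1 > 0 := by linarith
  have h2 : α ^ 2 + 1 > 0 := by positivity
  have h3 : α ^ 2 + α + 1 > 0 := by positivity
  have hpow : ∀ n : ℤ, α ^ n > 0 := fun n => zpow_pos hα n
  have key : ∀ a b c : ℤ, α ^ a + α ^ b + α ^ c > 0 := fun a b c => by
    have := hpow a; have := hpow b; have := hpow c; linarith
  have key2 : ∀ a b : ℤ, α ^ a + α ^ b > 0 := fun a b => by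
    have := hpow a; have := hpow b; linarith
  have e1 : α ^ (-1 : ℤ) = (α⁻¹) ^ 1 := by
    rw [inv_pow, ← zpow_natCast α, ← zpow_neg]; norm_num
  have e2 : α ^ (-2 : ℤ) = (α⁻¹) ^ 2 := by
    rw [inv_pow, ← zpow_natCast α, ← zpow_neg]; norm_num
  have e3 : α ^ (-3 : ℤ) = (α⁻¹) ^ 3 := by
    rw [inv_pow, ← zpow_natCast α, ← zpow_neg]; norm_num
  have hbne : (α⁻¹ : ℝ) ≠ 0 := inv_ne_zero hne
  have hb : (0:ℝ) < α⁻¹ := inv_pos.mpr hα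
  refine ⟨?_, ?_, ?_, ?_, ?_, ?_, ?_⟩ <;>
    first
    | (simp only [luceP3, e1, e2, e3]
       rw [eq_div_iff (by positivity)]
       field_simp <;>
       ring)
    | (field_simp; ring)
end

section
/- Let E_i, E_j, E_k be independent exponentials with rates θ_i, θ_j, θ_k. With f_{ij} := 1{E_i > E_j}, for i < j = i' < j' (i.e. f_{ij} = 1{E_i > E_j} and f_{jk} = 1{E_j > E_k}), the covariance is Cov(f_{ij}, f_{jk}) = -θ_i θ_j θ_k / ((θ_i+θ_j+θ_k)(θ_i+θ_j)(θ_j+θ_k)). -/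
open MeasureTheory ProbabilityTheory Real Set
open scoped ENNReal

namespace LuceAux

lemma expPDF_mul_exp {r c y : ℝ} (hr : 0 < r) (hc : 0 ≤ c) (hy : 0 ≤ y) :
    exponentialPDF r y * ENNReal.ofReal (rexp (-(c * y)))
      = ENNReal.ofReal (r / (r + c)) * exponentialPDF (r + c) y := by
  have hrc : 0 < r + c := by linarith
  rw [exponentialPDF_of_nonneg hy, exponentialPDF_of_nonneg hy,
    ← ENNReal.ofReal_mul (by positivity), ← ENNReal.ofReal_mul (by positivity)]
  congr 1
  have h1 : rexp (-(r * y)) * rexp (-(c * y)) = rexp (-((r + c) * y)) := by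
    rw [← Real.exp_add]; ring_nf
  rw [mul_assoc, h1, ← mul_assoc, div_mul_cancel₀ _ hrc.ne']

lemma lintegral_expPDF_Ioi {s x : ℝ} (hs : 0 < s) (hx : 0 ≤ x) :
    ∫⁻ y in Ioi x, exponentialPDF s y = ENNReal.ofReal (rexp (-(s * x))) := by
  have h := lintegral_add_compl (μ := volume) (exponentialPDF s) (measurableSet_Iic (a := x))
  rw [compl_Iic, lintegral_exponentialPDF_eq_antiDeriv hs x,
    lintegral_exponentialPDF_eq_one hs, if_pos hx] at h
  have he : rexp (-(s * x)) ≤ 1 := by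
    rw [Real.exp_le_one_iff]; nlinarith
  have h2 : ENNReal.ofReal (1 - rexp (-(s * x))) + ENNReal.ofReal (rexp (-(s * x))) = 1 := by
    rw [← ENNReal.ofReal_add (by linarith) (Real.exp_pos _).le]
    norm_num
  exact (ENNReal.add_right_inj ENNReal.ofReal_ne_top).mp (h.trans h2.symm)

lemma lintegral_expPDF_mul_exp_Ioi {r c x : ℝ} (hr : 0 < r) (hc : 0 ≤ c) (hx : 0 ≤ x) :
    ∫⁻ y in Ioi x, exponentialPDF r y * ENNReal.ofReal (rexp (-(c * y)))
      = ENNReal.ofReal (r / (r + c) * rexp (-((r + c) * x))) := by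
  have hrc : 0 < r + c := by linarith
  rw [setLIntegral_congr_fun measurableSet_Ioi
      (fun y hy => expPDF_mul_exp hr hc (le_trans hx (le_of_lt hy)))]
  have hm : Measurable (exponentialPDF (r + c)) := (measurable_exponentialPDFReal _).ennreal_ofReal
  rw [lintegral_const_mul _ hm,
    lintegral_expPDF_Ioi hrc hx, ← ENNReal.ofReal_mul (by positivity)]

lemma lintegral_expPDF_mul_exp {r c : ℝ} (hr : 0 < r) (hc : 0 ≤ c) :
    ∫⁻ y, exponentialPDF r y * ENNReal.ofReal (rexp (-(c * y))) = ENNReal.ofReal (r / (r + c)) := by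
  have h := lintegral_add_compl (μ := volume)
      (fun y => exponentialPDF r y * ENNReal.ofReal (rexp (-(c * y))))
      (measurableSet_Iio (a := 0))
  rw [compl_Iio] at h
  have h0 : ∫⁻ y in Iio 0, exponentialPDF r y * ENNReal.ofReal (rexp (-(c * y))) = 0 := by
    rw [setLIntegral_congr_fun measurableSet_Iio
      (fun y (hy : y < 0) => by rw [exponentialPDF_of_neg hy, zero_mul])]
    simp
  have h1 : ∫⁻ y in Ici 0, exponentialPDF r y * ENNReal.ofReal (rexp (-(c * y)))
      = ENNReal.ofReal (r / (r + c)) := by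
    rw [← setLIntegral_congr (Ioi_ae_eq_Ici (a := (0:ℝ))),
      lintegral_expPDF_mul_exp_Ioi hr hc le_rfl]
    norm_num
  rw [← h, h0, h1, zero_add]


lemma lintegral_expMeasure {r : ℝ} (f : ℝ → ℝ≥0∞) (hf : Measurable f) :
    ∫⁻ y, f y ∂expMeasure r = ∫⁻ y, exponentialPDF r y * f y := by
  have hm : Measurable (gammaPDF 1 r) := (measurable_gammaPDFReal _ _).ennreal_ofReal
  rw [expMeasure, gammaMeasure, lintegral_withDensity_eq_lintegral_mul _ hm hf]
  rfl

lemma ae_nonneg_expMeasure {r : ℝ} : ∀ᵐ y ∂expMeasure r, 0 ≤ y := by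
  rw [ae_iff]
  have hs : {y : ℝ | ¬ 0 ≤ y} = Iio 0 := by ext y; simp [not_le]
  rw [hs, expMeasure, gammaMeasure, withDensity_apply _ measurableSet_Iio]
  exact lintegral_gammaPDF_of_nonpos le_rfl

lemma meas_ind {t : ℝ} : Measurable (fun y : ℝ => (if t < y then (1:ℝ≥0∞) else 0)) :=
  Measurable.ite measurableSet_Ioi measurable_const measurable_const

lemma meas_exp_s16 {c : ℝ} : Measurable (fun y : ℝ => ENNReal.ofReal (rexp (-(c * y)))) :=
  (measurable_const.mul measurable_id).neg.exp.ennreal_ofReal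

lemma lintegral_ind_expMeasure {r t : ℝ} (hr : 0 < r) (ht : 0 ≤ t) :
    ∫⁻ y, (if t < y then (1:ℝ≥0∞) else 0) ∂expMeasure r = ENNReal.ofReal (rexp (-(r * t))) := by
  rw [lintegral_expMeasure _ meas_ind]
  have h : ∀ y, exponentialPDF r y * (if t < y then (1:ℝ≥0∞) else 0)
      = (Ioi t).indicator (fun y => exponentialPDF r y) y := fun y => by
    by_cases h : t < y <;> simp [h, indicator, mem_Ioi]
  rw [lintegral_congr h, lintegral_indicator measurableSet_Ioi _, lintegral_expPDF_Ioi hr ht]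

lemma lintegral_ind_mul_exp_expMeasure {r c t : ℝ} (hr : 0 < r) (hc : 0 ≤ c) (ht : 0 ≤ t) :
    ∫⁻ y, (if t < y then (1:ℝ≥0∞) else 0) * ENNReal.ofReal (rexp (-(c * y))) ∂expMeasure r
      = ENNReal.ofReal (r / (r + c) * rexp (-((r + c) * t))) := by
  rw [lintegral_expMeasure (fun y => (if t < y then (1:ℝ≥0∞) else 0) * ENNReal.ofReal (rexp (-(c * y)))) (meas_ind.mul meas_exp_s16)]
  have h : ∀ y, exponentialPDF r y * ((if t < y then (1:ℝ≥0∞) else 0)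
        * ENNReal.ofReal (rexp (-(c * y))))
      = (Ioi t).indicator (fun y => exponentialPDF r y * ENNReal.ofReal (rexp (-(c * y)))) y :=
    fun y => by by_cases h : t < y <;> simp [h, indicator, mem_Ioi, mul_comm, mul_left_comm]
  rw [lintegral_congr h, lintegral_indicator measurableSet_Ioi _,
    lintegral_expPDF_mul_exp_Ioi hr hc ht]

lemma lintegral_exp_expMeasure {r c : ℝ} (hr : 0 < r) (hc : 0 ≤ c) :
    ∫⁻ y, ENNReal.ofReal (rexp (-(c * y))) ∂expMeasure r = ENNReal.ofReal (r / (r + c)) := by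
  rw [lintegral_expMeasure _ meas_exp_s16, lintegral_expPDF_mul_exp hr hc]


lemma lintegral_pi2 (ν : Fin 2 → Measure ℝ) [∀ i, SigmaFinite (ν i)]
    (k : ℝ → ℝ → ℝ≥0∞) (hk : Measurable fun p : ℝ × ℝ => k p.1 p.2) :
    ∫⁻ t : Fin 2 → ℝ, k (t 0) (t 1) ∂Measure.pi ν = ∫⁻ y, ∫⁻ x, k x y ∂ν 0 ∂ν 1 := by
  have hmp := measurePreserving_piFinTwo ν
  have h1 : ∫⁻ t : Fin 2 → ℝ, k (t 0) (t 1) ∂Measure.pi ν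
      = ∫⁻ p : ℝ × ℝ, k p.1 p.2 ∂(ν 0).prod (ν 1) := by
    have := hmp.lintegral_comp (f := fun p : ℝ × ℝ => k p.1 p.2) hk
    simpa using this
  rw [h1, lintegral_prod_symm _ hk.aemeasurable]

lemma lintegral_pi3 (μ : Fin 3 → Measure ℝ) [∀ i, SigmaFinite (μ i)]
    (g : ℝ → ℝ → ℝ → ℝ≥0∞) (hg : Measurable fun p : ℝ × ℝ × ℝ => g p.1 p.2.1 p.2.2) :
    ∫⁻ e : Fin 3 → ℝ, g (e 0) (e 1) (e 2) ∂Measure.pi μ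
      = ∫⁻ z, ∫⁻ y, ∫⁻ x, g x y z ∂μ 0 ∂μ 1 ∂μ 2 := by
  have hmp := measurePreserving_piFinSuccAbove μ 2
  set ν : Fin 2 → Measure ℝ := fun j => μ ((2 : Fin 3).succAbove j) with hν
  have hm : Measurable (fun p : ℝ × (Fin 2 → ℝ) => ((p.2 0, p.2 1, p.1) : ℝ × ℝ × ℝ)) :=
    ((measurable_pi_apply 0).comp measurable_snd).prodMk
      ((((measurable_pi_apply 1).comp measurable_snd)).prodMk measurable_fst)
  have hF : Measurable (fun p : ℝ × (Fin 2 → ℝ) => g (p.2 0) (p.2 1) p.1) := hg.comp hm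
  have h1 : ∫⁻ e : Fin 3 → ℝ, g (e 0) (e 1) (e 2) ∂Measure.pi μ
      = ∫⁻ p : ℝ × (Fin 2 → ℝ), g (p.2 0) (p.2 1) p.1 ∂(μ 2).prod (Measure.pi ν) := by
    have := hmp.lintegral_comp (f := fun p : ℝ × (Fin 2 → ℝ) => g (p.2 0) (p.2 1) p.1) hF
    rw [← this]
    rfl
  rw [h1, lintegral_prod _ hF.aemeasurable]
  have hν0 : ν 0 = μ 0 := rfl
  have hν1 : ν 1 = μ 1 := rfl
  refine lintegral_congr fun z => ?_
  have hm2 : Measurable (fun q : ℝ × ℝ => ((q.1, q.2, z) : ℝ × ℝ × ℝ)) :=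
    measurable_fst.prodMk (measurable_snd.prodMk measurable_const)
  have := lintegral_pi2 ν (fun x y => g x y z) (hg.comp hm2)
  rw [this, hν0, hν1]

end LuceAux

open MeasureTheory ProbabilityTheory LuceAux Real Set
open scoped ENNReal

/-- For independent exponentials `E_i, E_j, E_k` with rates `θi, θj, θk > 0`, the covariance of
the inversion indicators `f_{ij} = 1{E_i > E_j}` and `f_{jk} = 1{E_j > E_k}` is
`-θi θj θk / ((θi+θj+θk)(θi+θj)(θj+θk))`. -/
theorem luce_inversion_indicator_covariance (θi θj θk : ℝ)
    (hi : 0 < θi) (hj : 0 < θj) (hk : 0 < θk) :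
    (∫ e : Fin 3 → ℝ,
        ((if e 0 > e 1 then (1:ℝ) else 0) * (if e 1 > e 2 then (1:ℝ) else 0))
        ∂(Measure.pi fun m => expMeasure (![θi, θj, θk] m)))
      - (∫ e : Fin 3 → ℝ, (if e 0 > e 1 then (1:ℝ) else 0)
          ∂(Measure.pi fun m => expMeasure (![θi, θj, θk] m)))
        * (∫ e : Fin 3 → ℝ, (if e 1 > e 2 then (1:ℝ) else 0)
            ∂(Measure.pi fun m => expMeasure (![θi, θj, θk] m)))
      = -(θi * θj * θk) / ((θi + θj + θk) * (θi + θj) * (θj + θk)) := by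
  simp only [gt_iff_lt]
  set μ : Fin 3 → Measure ℝ := fun m => expMeasure (![θi, θj, θk] m) with hμ
  have hP : ∀ m, IsProbabilityMeasure (μ m) := by
    intro m
    have hpos : 0 < ![θi, θj, θk] m := by fin_cases m <;> simpa
    exact isProbabilityMeasure_expMeasure hpos
  haveI : ∀ m, SigmaFinite (μ m) := fun m => by
    haveI := hP m; infer_instance
  have hμ0 : μ 0 = expMeasure θi := rfl
  have hμ1 : μ 1 = expMeasure θj := rfl
  have hμ2 : μ 2 = expMeasure θk := rfl
  -- measurability
  have m1 : Measurable (fun p : ℝ × ℝ × ℝ => (if p.2.1 < p.1 then (1:ℝ≥0∞) else 0)) :=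
    Measurable.ite (measurableSet_lt (measurable_fst.comp measurable_snd) measurable_fst)
      measurable_const measurable_const
  have m2 : Measurable (fun p : ℝ × ℝ × ℝ => (if p.2.2 < p.2.1 then (1:ℝ≥0∞) else 0)) :=
    Measurable.ite (measurableSet_lt (measurable_snd.comp measurable_snd)
      (measurable_fst.comp measurable_snd)) measurable_const measurable_const
  have mR1 : Measurable (fun e : Fin 3 → ℝ => (if e 1 < e 0 then (1:ℝ) else 0)) :=
    Measurable.ite (measurableSet_lt (measurable_pi_apply 1) (measurable_pi_apply 0))
      measurable_const measurable_const
  have mR2 : Measurable (fun e : Fin 3 → ℝ => (if e 2 < e 1 then (1:ℝ) else 0)) :=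
    Measurable.ite (measurableSet_lt (measurable_pi_apply 2) (measurable_pi_apply 1))
      measurable_const measurable_const
  -- the three lintegrals
  have hA : (∫⁻ e : Fin 3 → ℝ,
        ((if e 1 < e 0 then (1:ℝ≥0∞) else 0) * (if e 2 < e 1 then (1:ℝ≥0∞) else 0)) ∂Measure.pi μ)
      = ENNReal.ofReal (θj / (θj + θi)) * ENNReal.ofReal (θk / (θk + (θj + θi))) := by
    rw [lintegral_pi3 μ
      (fun x y z => (if y < x then (1:ℝ≥0∞) else 0) * (if z < y then (1:ℝ≥0∞) else 0))
      (m1.mul m2), hμ0, hμ1, hμ2]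
    have hmid : ∀ z : ℝ, 0 ≤ z →
        (∫⁻ y, ∫⁻ x, (if y < x then (1:ℝ≥0∞) else 0) * (if z < y then (1:ℝ≥0∞) else 0)
            ∂expMeasure θi ∂expMeasure θj)
          = ENNReal.ofReal (θj / (θj + θi) * rexp (-((θj + θi) * z))) := by
      intro z hz
      have hinner : ∀ y : ℝ, 0 ≤ y →
          (∫⁻ x, (if y < x then (1:ℝ≥0∞) else 0) * (if z < y then (1:ℝ≥0∞) else 0)
              ∂expMeasure θi)
            = (if z < y then (1:ℝ≥0∞) else 0) * ENNReal.ofReal (rexp (-(θi * y))) := by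
        intro y hy
        rw [lintegral_congr (fun x => mul_comm _ _),
          lintegral_const_mul' _ _ (by split_ifs <;> simp),
          lintegral_ind_expMeasure hi hy]
      rw [lintegral_congr_ae (ae_nonneg_expMeasure.mono hinner),
        lintegral_ind_mul_exp_expMeasure hj hi.le hz]
    rw [lintegral_congr_ae (ae_nonneg_expMeasure.mono hmid),
      lintegral_congr (fun z => ENNReal.ofReal_mul (show (0:ℝ) ≤ θj / (θj + θi) by positivity)),
      lintegral_const_mul' _ _ ENNReal.ofReal_ne_top,
      lintegral_exp_expMeasure hk (by positivity)]
  have hB : (∫⁻ e : Fin 3 → ℝ, (if e 1 < e 0 then (1:ℝ≥0∞) else 0) ∂Measure.pi μ)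
      = ENNReal.ofReal (θj / (θj + θi)) := by
    rw [lintegral_pi3 μ (fun x y _ => (if y < x then (1:ℝ≥0∞) else 0)) m1, hμ0, hμ1, hμ2]
    have hmid : (∫⁻ y, ∫⁻ x, (if y < x then (1:ℝ≥0∞) else 0) ∂expMeasure θi ∂expMeasure θj)
        = ENNReal.ofReal (θj / (θj + θi)) := by
      rw [lintegral_congr_ae (ae_nonneg_expMeasure.mono
          (fun y hy => lintegral_ind_expMeasure hi hy)),
        lintegral_exp_expMeasure hj hi.le]
    haveI : IsProbabilityMeasure (expMeasure θk) := hP 2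
    rw [lintegral_congr (fun z => hmid), lintegral_const, measure_univ, mul_one]
  have hC : (∫⁻ e : Fin 3 → ℝ, (if e 2 < e 1 then (1:ℝ≥0∞) else 0) ∂Measure.pi μ)
      = ENNReal.ofReal (θk / (θk + θj)) := by
    rw [lintegral_pi3 μ (fun _ y z => (if z < y then (1:ℝ≥0∞) else 0)) m2, hμ0, hμ1, hμ2]
    haveI : IsProbabilityMeasure (expMeasure θi) := hP 0
    have hinner : ∀ y z : ℝ,
        (∫⁻ _x, (if z < y then (1:ℝ≥0∞) else 0) ∂expMeasure θi)
          = (if z < y then (1:ℝ≥0∞) else 0) := fun y z => by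
      rw [lintegral_const, measure_univ, mul_one]
    have hmid : ∀ z : ℝ, 0 ≤ z →
        (∫⁻ y, ∫⁻ _x, (if z < y then (1:ℝ≥0∞) else 0) ∂expMeasure θi ∂expMeasure θj)
          = ENNReal.ofReal (rexp (-(θj * z))) := fun z hz => by
      rw [lintegral_congr (fun y => hinner y z), lintegral_ind_expMeasure hj hz]
    rw [lintegral_congr_ae (ae_nonneg_expMeasure.mono hmid),
      lintegral_exp_expMeasure hk hj.le]
  -- Bochner ↔ lintegral
  have eA : (∫ e : Fin 3 → ℝ,
        ((if e 1 < e 0 then (1:ℝ) else 0) * (if e 2 < e 1 then (1:ℝ) else 0)) ∂Measure.pi μ)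
      = (∫⁻ e : Fin 3 → ℝ,
        ((if e 1 < e 0 then (1:ℝ≥0∞) else 0) * (if e 2 < e 1 then (1:ℝ≥0∞) else 0))
          ∂Measure.pi μ).toReal := by
    rw [integral_eq_lintegral_of_nonneg_ae (f := fun e : Fin 3 → ℝ =>
          (if e 1 < e 0 then (1:ℝ) else 0) * (if e 2 < e 1 then (1:ℝ) else 0))
        (ae_of_all _ fun e => by dsimp only [Pi.zero_apply]; split_ifs <;> norm_num)
        (mR1.mul mR2).aestronglyMeasurable]
    congr 1
    exact lintegral_congr fun e => by split_ifs <;> simp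
  have eB : (∫ e : Fin 3 → ℝ, (if e 1 < e 0 then (1:ℝ) else 0) ∂Measure.pi μ)
      = (∫⁻ e : Fin 3 → ℝ, (if e 1 < e 0 then (1:ℝ≥0∞) else 0) ∂Measure.pi μ).toReal := by
    rw [integral_eq_lintegral_of_nonneg_ae
        (ae_of_all _ fun e => by split_ifs <;> norm_num)
        mR1.aestronglyMeasurable]
    congr 1
    exact lintegral_congr fun e => by split_ifs <;> simp
  have eC : (∫ e : Fin 3 → ℝ, (if e 2 < e 1 then (1:ℝ) else 0) ∂Measure.pi μ)
      = (∫⁻ e : Fin 3 → ℝ, (if e 2 < e 1 then (1:ℝ≥0∞) else 0) ∂Measure.pi μ).toReal := by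
    rw [integral_eq_lintegral_of_nonneg_ae
        (ae_of_all _ fun e => by split_ifs <;> norm_num)
        mR2.aestronglyMeasurable]
    congr 1
    exact lintegral_congr fun e => by split_ifs <;> simp
  rw [eA, eB, eC, hA, hB, hC, ENNReal.toReal_mul,
    ENNReal.toReal_ofReal (by positivity), ENNReal.toReal_ofReal (by positivity),
    ENNReal.toReal_ofReal (by positivity)]
  have d1 : θj + θi ≠ 0 := by positivity
  have d2 : θk + (θj + θi) ≠ 0 := by positivity
  have d3 : θk + θj ≠ 0 := by positivity
  have d4 : θi + θj + θk ≠ 0 := by positivity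
  have d5 : θi + θj ≠ 0 := by positivity
  have d6 : θj + θk ≠ 0 := by positivity
  field_simp
  ring
end
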